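/- arXiv:1611.00297 — 9 statements merged into one kernel-verified Lean document; each statement's English description precedes it below -/
import Mathlib

section
/- Let m ≥ 1, ζ > 0, and let x, y ∈ ℝ_{≥0}^m with x_i > ζ for every i and ‖y − x‖_∞ ≤ ζ. Then G(y) ≥ G(x) − ζ·Σ_{i=1}^m ln(‖x‖₁/x_i) − (ζ²/2)·( Σ_{i=1}^m 1/(x_i − ζ) − m/(‖x‖₁/m − ζ) ), where ‖x‖₁ = Σ_i x_i. Moreover, the coefficient Σ_{i=1}^m 1/(x_i − ζ) − m/(‖x‖₁/m − ζ) of ζ² is nonnegative, and it equals 0 exactly when all the x_i are equal. -/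
/-!
Write `u = x - ζ` (coordinatewise). On positive vectors `G(z) = ∑ zᵢ ln(‖z‖₁/zᵢ)` is monotone,
by Gibbs' inequality, and `y ≥ u`, so `G(y) ≥ G(u)`. Splitting `ln(‖u‖₁/uᵢ)` as
`ln(‖x‖₁/xᵢ) - ln(pᵢ/qᵢ)` with `pᵢ = uᵢ` and `qᵢ = ‖u‖₁ xᵢ/‖x‖₁` gives
`G(u) = G(x) - ζ ∑ ln(‖x‖₁/xᵢ) - ∑ pᵢ ln(pᵢ/qᵢ)`, and the relative entropy of `p` to `q`
(equal total masses) is at most `∑ (pᵢ - qᵢ)²/(2 cᵢ)` for any `0 < cᵢ ≤ min(pᵢ, qᵢ)`. With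
`cᵢ = ‖u‖₁ uᵢ/‖x‖₁` this sum is `ζ²(‖u‖₁ ∑ 1/uᵢ - m²)/(2‖x‖₁)`, and `‖u‖₁ ≤ ‖x‖₁`.
The coefficient of `ζ²` is `(‖u‖₁ ∑ 1/uᵢ - m²)/‖u‖₁`, and its sign and equality case come from
`2(‖u‖₁ ∑ 1/uᵢ - m²) = ∑ᵢ ∑ⱼ (uᵢ - uⱼ)²/(uᵢ uⱼ)`.
-/

open scoped BigOperators

/-- Generalized entropy `G(x) = -∑ xᵢ ln xᵢ + (∑ xᵢ) ln (∑ xᵢ)`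
(with the convention `0 ln 0 = 0`, automatic since `Real.log 0 = 0`). -/
noncomputable def genEntropy {m : ℕ} (x : Fin m → ℝ) : ℝ :=
  -(∑ i, x i * Real.log (x i)) + (∑ i, x i) * Real.log (∑ i, x i)

open Real Finset InformationTheory

lemma log_le_half_sub_inv {s : ℝ} (hs : 1 ≤ s) : log s ≤ (s - s⁻¹) / 2 := by
  have hx₀ : 0 ≤ (s - 1) / (s + 1) := div_nonneg (by linarith) (by linarith)
  have hx₁ : (s - 1) / (s + 1) < 1 := (div_lt_one (by linarith)).2 (by linarith)
  -- the `n = 0` case of the series bound for `log ((1 + t) / (1 - t)) / 2`, at `t = (s - 1)/(s + 1)`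
  have h := log_div_le_sum_range_add hx₀ hx₁ 0
  have hs' : (1 + (s - 1) / (s + 1)) / (1 - (s - 1) / (s + 1)) = s := by
    field_simp; ring
  have hr : (s - 1) / (s + 1) / (1 - ((s - 1) / (s + 1)) ^ 2) = (s - s⁻¹) / 4 := by
    have e : 1 - ((s - 1) / (s + 1)) ^ 2 = 4 * s / (s + 1) ^ 2 := by field_simp; ring
    have : s ≠ 0 := by positivity
    rw [e]; field_simp; ring
  simp only [hs', range_zero, sum_empty, zero_add, mul_zero, pow_one, hr] at h
  linarith

lemma log_le_two_mul_sub_one_div_add_one {s : ℝ} (hs₀ : 0 < s) (hs : s ≤ 1) :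
    log s ≤ 2 * (s - 1) / (s + 1) := by
  have h := le_log_one_add_of_nonneg (sub_nonneg.2 ((one_le_inv₀ hs₀).2 hs))
  rw [add_sub_cancel, log_inv] at h
  have e : 2 * (s⁻¹ - 1) / (s⁻¹ - 1 + 2) = -(2 * (s - 1) / (s + 1)) := by
    rw [sub_add_eq_add_sub, show s⁻¹ + 2 - 1 = s⁻¹ + 1 by ring]
    field_simp; ring
  linarith

lemma klFun_le_of_one_le {s : ℝ} (hs : 1 ≤ s) : klFun s ≤ (s - 1) ^ 2 / 2 := by
  have h := mul_le_mul_of_nonneg_left (log_le_half_sub_inv hs) (by linarith : 0 ≤ s)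
  have e : s * ((s - s⁻¹) / 2) = (s ^ 2 - 1) / 2 := by field_simp
  rw [klFun_apply]; nlinarith

lemma klFun_le_of_le_one {s : ℝ} (hs₀ : 0 < s) (hs : s ≤ 1) :
    klFun s ≤ (s - 1) ^ 2 / (2 * s) := by
  have h := mul_le_mul_of_nonneg_left (log_le_two_mul_sub_one_div_add_one hs₀ hs) hs₀.le
  have e : s * (2 * (s - 1) / (s + 1)) + 1 - s = (s - 1) ^ 2 / (s + 1) := by
    field_simp; ring
  calc klFun s ≤ (s - 1) ^ 2 / (s + 1) := by rw [klFun_apply]; linarith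
    _ ≤ (s - 1) ^ 2 / (2 * s) := by gcongr; linarith

lemma klFun_le_sq_div {s c : ℝ} (hc : 0 < c) (hcs : c ≤ s) (hc₁ : c ≤ 1) :
    klFun s ≤ (s - 1) ^ 2 / (2 * c) := by
  rcases le_total 1 s with hs | hs
  · calc klFun s ≤ (s - 1) ^ 2 / 2 := klFun_le_of_one_le hs
      _ ≤ (s - 1) ^ 2 / (2 * c) := by gcongr; linarith
  · calc klFun s ≤ (s - 1) ^ 2 / (2 * s) := klFun_le_of_le_one (hc.trans_le hcs) hs
      _ ≤ (s - 1) ^ 2 / (2 * c) := by gcongr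

lemma mul_klFun_div {p q : ℝ} (hq : q ≠ 0) : q * klFun (p / q) = p * log (p / q) - p + q := by
  rw [klFun_apply]; field_simp; ring

lemma mul_klFun_div_le {p q c : ℝ} (hc : 0 < c) (hcp : c ≤ p) (hcq : c ≤ q) :
    q * klFun (p / q) ≤ (p - q) ^ 2 / (2 * c) := by
  have hq : 0 < q := hc.trans_le hcq
  have h := klFun_le_sq_div (div_pos hc hq) (div_le_div_of_nonneg_right hcp hq.le)
    ((div_le_one hq).2 hcq)
  calc q * klFun (p / q) ≤ q * ((p / q - 1) ^ 2 / (2 * (c / q))) := by gcongr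
    _ = (p - q) ^ 2 / (2 * c) := by field_simp

section FiniteSums

variable {ι : Type*} (s : Finset ι)

lemma sum_mul_log_div_eq_sum_mul_klFun {p q : ι → ℝ} (hq : ∀ i ∈ s, q i ≠ 0)
    (hpq : ∑ i ∈ s, p i = ∑ i ∈ s, q i) :
    ∑ i ∈ s, p i * log (p i / q i) = ∑ i ∈ s, q i * klFun (p i / q i) := by
  rw [sum_congr rfl fun i hi => mul_klFun_div (hq i hi), sum_add_distrib, sum_sub_distrib, hpq,
    sub_add_cancel]

lemma sum_mul_log_div_nonneg {p q : ι → ℝ} (hp : ∀ i ∈ s, 0 ≤ p i) (hq : ∀ i ∈ s, 0 < q i)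
    (hpq : ∑ i ∈ s, p i = ∑ i ∈ s, q i) :
    0 ≤ ∑ i ∈ s, p i * log (p i / q i) := by
  rw [sum_mul_log_div_eq_sum_mul_klFun s (fun i hi => (hq i hi).ne') hpq]
  exact sum_nonneg fun i hi =>
    mul_nonneg (hq i hi).le (klFun_nonneg (div_nonneg (hp i hi) (hq i hi).le))

lemma sum_mul_log_div_le_sum_sq_div {p q c : ι → ℝ} (hc : ∀ i ∈ s, 0 < c i)
    (hcp : ∀ i ∈ s, c i ≤ p i) (hcq : ∀ i ∈ s, c i ≤ q i) (hpq : ∑ i ∈ s, p i = ∑ i ∈ s, q i) :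
    ∑ i ∈ s, p i * log (p i / q i) ≤ ∑ i ∈ s, (p i - q i) ^ 2 / (2 * c i) := by
  rw [sum_mul_log_div_eq_sum_mul_klFun s (fun i hi => (hc i hi).trans_le (hcq i hi) |>.ne') hpq]
  exact sum_le_sum fun i hi => mul_klFun_div_le (hc i hi) (hcp i hi) (hcq i hi)

lemma sum_sum_sq_sub_div_mul (u : ι → ℝ) (hu : ∀ i ∈ s, u i ≠ 0) :
    ∑ i ∈ s, ∑ j ∈ s, (u i - u j) ^ 2 / (u i * u j) =
      2 * ((∑ i ∈ s, u i) * (∑ i ∈ s, (u i)⁻¹) - (#s : ℝ) ^ 2) := by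
  have h : ∀ i ∈ s, ∀ j ∈ s, (u i - u j) ^ 2 / (u i * u j) = u i * (u j)⁻¹ + u j * (u i)⁻¹ - 2 :=
    fun i hi j hj => by field_simp [hu i hi, hu j hj]; ring
  rw [sum_congr rfl fun i hi => sum_congr rfl (h i hi)]
  simp only [sum_sub_distrib, sum_add_distrib, ← mul_sum, ← sum_mul, sum_const, nsmul_eq_mul]
  ring

lemma card_sq_le_sum_mul_sum_inv {u : ι → ℝ} (hu : ∀ i ∈ s, 0 < u i) :
    (#s : ℝ) ^ 2 ≤ (∑ i ∈ s, u i) * ∑ i ∈ s, (u i)⁻¹ := by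
  have h := sum_sum_sq_sub_div_mul s u fun i hi => (hu i hi).ne'
  have : 0 ≤ ∑ i ∈ s, ∑ j ∈ s, (u i - u j) ^ 2 / (u i * u j) :=
    sum_nonneg fun i hi => sum_nonneg fun j hj => by have := hu i hi; have := hu j hj; positivity
  linarith

lemma sum_mul_sum_inv_eq_card_sq_iff {u : ι → ℝ} (hu : ∀ i ∈ s, 0 < u i) :
    (∑ i ∈ s, u i) * ∑ i ∈ s, (u i)⁻¹ = (#s : ℝ) ^ 2 ↔ ∀ i ∈ s, ∀ j ∈ s, u i = u j := by
  have hterm : ∀ i ∈ s, ∀ j ∈ s, 0 ≤ (u i - u j) ^ 2 / (u i * u j) :=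
    fun i hi j hj => by have := hu i hi; have := hu j hj; positivity
  rw [← sub_eq_zero, ← mul_right_inj' (two_ne_zero (α := ℝ)), mul_zero,
    ← sum_sum_sq_sub_div_mul s u fun i hi => (hu i hi).ne',
    sum_eq_zero_iff_of_nonneg fun i hi => sum_nonneg (hterm i hi)]
  refine forall₂_congr fun i hi => ?_
  rw [sum_eq_zero_iff_of_nonneg (hterm i hi)]
  refine forall₂_congr fun j hj => ?_
  rw [div_eq_zero_iff, or_iff_left (mul_pos (hu i hi) (hu j hj)).ne', sq_eq_zero_iff, sub_eq_zero]

end FiniteSums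

lemma genEntropy_eq_sum_mul_log_div {m : ℕ} {z : Fin m → ℝ} (hz : ∀ i, 0 < z i) :
    genEntropy z = ∑ i, z i * log ((∑ j, z j) / z i) := by
  have h : ∀ i, z i * log ((∑ j, z j) / z i) = z i * log (∑ j, z j) - z i * log (z i) := by
    intro i
    have : 0 < ∑ j, z j := (hz i).trans_le (single_le_sum (fun j _ => (hz j).le) (mem_univ i))
    rw [log_div this.ne' (hz i).ne', mul_sub]
  rw [genEntropy, sum_congr rfl fun i _ => h i, sum_sub_distrib, ← sum_mul]
  ring

lemma genEntropy_le_of_le {m : ℕ} {u v : Fin m → ℝ} (hu : ∀ i, 0 < u i) (huv : ∀ i, u i ≤ v i) :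
    genEntropy u ≤ genEntropy v := by
  rcases isEmpty_or_nonempty (Fin m) with hm | hm
  · simp [genEntropy]
  have hv : ∀ i, 0 < v i := fun i => (hu i).trans_le (huv i)
  set U := ∑ j, u j
  set V := ∑ j, v j
  have hU : 0 < U := sum_pos (fun i _ => hu i) univ_nonempty
  have hV : 0 < V := sum_pos (fun i _ => hv i) univ_nonempty
  calc genEntropy u = ∑ i, u i * log (U / u i) := genEntropy_eq_sum_mul_log_div hu
    _ ≤ ∑ i, u i * log (V / v i) := by
      have hgibbs := sum_mul_log_div_nonneg univ (p := u) (q := fun i => U * v i / V)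
        (fun i _ => (hu i).le) (fun i _ => by have := hv i; positivity)
        (by rw [← sum_div, ← mul_sum, mul_div_cancel_right₀ _ hV.ne'])
      rw [← sub_nonneg, ← sum_sub_distrib]
      convert hgibbs using 2 with i
      have := hu i; have := hv i
      rw [← mul_sub, ← log_div (by positivity) (by positivity)]
      congr 2
      field_simp
    _ ≤ ∑ i, v i * log (V / v i) := by
      refine sum_le_sum fun i _ => mul_le_mul_of_nonneg_right (huv i) (log_nonneg ?_)
      rw [le_div_iff₀ (hv i), one_mul]
      exact single_le_sum (fun j _ => (hv j).le) (mem_univ i)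
    _ = genEntropy v := (genEntropy_eq_sum_mul_log_div hv).symm

lemma genEntropy_sub_const_eq {m : ℕ} {x : Fin m → ℝ} {ζ : ℝ} (hx₀ : ∀ i, 0 < x i)
    (hx : ∀ i, ζ < x i) :
    genEntropy (fun i => x i - ζ) = genEntropy x - (∑ i, log ((∑ j, x j) / x i)) * ζ
      - ∑ i, (x i - ζ) * log ((x i - ζ) / ((∑ j, (x j - ζ)) * x i / ∑ j, x j)) := by
  rcases isEmpty_or_nonempty (Fin m) with hm | hm
  · simp [genEntropy]
  have hu : ∀ i, 0 < x i - ζ := fun i => sub_pos.2 (hx i)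
  set S := ∑ j, x j
  set U := ∑ j, (x j - ζ)
  have hS : 0 < S := sum_pos (fun i _ => hx₀ i) univ_nonempty
  have hU : 0 < U := sum_pos (fun i _ => hu i) univ_nonempty
  have hlin : ∑ i, (x i - ζ) * log (S / x i) = genEntropy x - (∑ i, log (S / x i)) * ζ := by
    simp only [genEntropy_eq_sum_mul_log_div hx₀, sub_mul, sum_sub_distrib, sum_mul, S]
    simp only [mul_comm ζ]
  rw [← hlin, genEntropy_eq_sum_mul_log_div hu]
  change ∑ i, (x i - ζ) * log (U / (x i - ζ)) = _
  rw [← sum_sub_distrib]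
  refine sum_congr rfl fun i _ => ?_
  have := hu i; have := hx₀ i
  rw [← mul_sub, ← log_div (by positivity) (by positivity)]
  congr 2
  field_simp

lemma sum_mul_log_div_sub_const_le {m : ℕ} {x : Fin m → ℝ} {ζ : ℝ} (hζ : 0 ≤ ζ)
    (hx : ∀ i, ζ < x i) :
    ∑ i, (x i - ζ) * log ((x i - ζ) / ((∑ j, (x j - ζ)) * x i / ∑ j, x j))
      ≤ 1 / 2 * (((∑ j, (x j - ζ)) * ∑ i, (x i - ζ)⁻¹ - (m : ℝ) ^ 2) / ∑ j, (x j - ζ))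
          * ζ ^ 2 := by
  rcases isEmpty_or_nonempty (Fin m) with hm | hm
  · simp
  have hu : ∀ i, 0 < x i - ζ := fun i => sub_pos.2 (hx i)
  have hQ := card_sq_le_sum_mul_sum_inv univ fun i _ => hu i
  rw [card_univ, Fintype.card_fin, ← sub_nonneg] at hQ
  set S := ∑ j, x j
  set U := ∑ j, (x j - ζ) with hUdef
  have hS : 0 < S := sum_pos (fun i _ => hζ.trans_lt (hx i)) univ_nonempty
  have hU : 0 < U := sum_pos (fun i _ => hu i) univ_nonempty
  have hSU : S = U + m * ζ := by simp [U, S, sum_sub_distrib]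
  have hUS : U ≤ S := hSU ▸ le_add_of_nonneg_right (by positivity)
  calc _ ≤ ∑ i, ((x i - ζ) - U * x i / S) ^ 2 / (2 * (U * (x i - ζ) / S)) := by
        refine sum_mul_log_div_le_sum_sq_div univ (fun i _ => by have := hu i; positivity)
          (fun i _ => ?_) (fun i _ => ?_) ?_
        · rw [div_le_iff₀ hS, mul_comm]
          exact mul_le_mul_of_nonneg_left hUS (hu i).le
        · gcongr; linarith
        · rw [← sum_div, ← mul_sum, mul_div_cancel_right₀ _ hS.ne']
    _ = ∑ i, ζ ^ 2 / (2 * S * U) * (m ^ 2 * (x i - ζ) - 2 * m * U + U ^ 2 * (x i - ζ)⁻¹) := by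
        refine sum_congr rfl fun i _ => ?_
        have := hu i
        rw [hSU]
        field_simp
        ring
    _ = ζ ^ 2 / (2 * S) * (U * ∑ i, (x i - ζ)⁻¹ - (m : ℝ) ^ 2) := by
        rw [← mul_sum, sum_add_distrib, sum_sub_distrib, ← mul_sum, ← mul_sum, ← mul_sum,
          ← hUdef, sum_const, card_univ, Fintype.card_fin, nsmul_eq_mul]
        field_simp
        ring
    _ ≤ ζ ^ 2 / (2 * U) * (U * ∑ i, (x i - ζ)⁻¹ - (m : ℝ) ^ 2) := by gcongr
    _ = _ := by ring

lemma card_div_mean_sub_eq {m : ℕ} (hm : m ≠ 0) (x : Fin m → ℝ) (ζ : ℝ) :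
    (m : ℝ) / ((∑ j, x j) / m - ζ) = m ^ 2 / ∑ j, (x j - ζ) := by
  have hm' : (m : ℝ) ≠ 0 := Nat.cast_ne_zero.2 hm
  rw [sum_sub_distrib, sum_const, card_univ, Fintype.card_fin, nsmul_eq_mul,
    show (∑ j, x j) / m - ζ = (∑ j, x j - m * ζ) / m by field_simp, div_div_eq_mul_div, sq]

theorem stmt5_general {m : ℕ} (hm : 1 ≤ m) (ζ : ℝ) (hζ : 0 < ζ)
    (x y : Fin m → ℝ) (hx : ∀ i, ζ < x i)
    (hclose : ∀ i, |y i - x i| ≤ ζ) :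
    genEntropy y ≥
      genEntropy x - (∑ i, Real.log ((∑ j, x j) / x i)) * ζ
        - 1 / 2 * ((∑ i, 1 / (x i - ζ)) - m / ((∑ j, x j) / m - ζ)) * ζ ^ 2 ∧
    0 ≤ (∑ i, 1 / (x i - ζ)) - m / ((∑ j, x j) / m - ζ) ∧
    ((∑ i, 1 / (x i - ζ)) - m / ((∑ j, x j) / m - ζ) = 0 ↔ ∀ i j, x i = x j) := by
  have hu : ∀ i, 0 < x i - ζ := fun i => sub_pos.2 (hx i)
  have hU : 0 < ∑ i, (x i - ζ) := sum_pos (fun i _ => hu i) (univ_nonempty_iff.2 ⟨⟨0, hm⟩⟩)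
  have hcard := card_sq_le_sum_mul_sum_inv univ fun i _ => hu i
  have hcard_eq := sum_mul_sum_inv_eq_card_sq_iff univ fun i _ => hu i
  rw [card_univ, Fintype.card_fin] at hcard hcard_eq
  have hcoef : (∑ i, 1 / (x i - ζ)) - m / ((∑ j, x j) / m - ζ)
      = ((∑ j, (x j - ζ)) * ∑ i, (x i - ζ)⁻¹ - (m : ℝ) ^ 2) / ∑ j, (x j - ζ) := by
    rw [card_div_mean_sub_eq (by omega), sub_div, mul_div_cancel_left₀ _ hU.ne']
    simp only [one_div]
  rw [hcoef]
  refine ⟨?_, div_nonneg (sub_nonneg.2 hcard) hU.le, ?_⟩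
  · calc genEntropy y ≥ genEntropy (fun i => x i - ζ) :=
          genEntropy_le_of_le hu fun i => by linarith [(abs_le.1 (hclose i)).1]
      _ = _ := genEntropy_sub_const_eq (fun i => hζ.trans (hx i)) hx
      _ ≥ _ := sub_le_sub_left (sum_mul_log_div_sub_const_le hζ.le hx) _
  · rw [div_eq_zero_iff, or_iff_left hU.ne', sub_eq_zero, hcard_eq]
    simp only [mem_univ, forall_const, sub_left_inj]

/-- If `xᵢ > ζ` for all `i` and `‖y − x‖_∞ ≤ ζ` (with `y ≥ 0`), then
`G(y) ≥ G(x) − ζ ∑ᵢ ln(‖x‖₁/xᵢ) − (ζ²/2)(∑ᵢ 1/(xᵢ−ζ) − m/(‖x‖₁/m − ζ))`;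
moreover the coefficient `∑ᵢ 1/(xᵢ−ζ) − m/(‖x‖₁/m − ζ)` is nonnegative, and it
vanishes exactly when all the `xᵢ` are equal. -/
theorem stmt5 {m : ℕ} (hm : 1 ≤ m) (ζ : ℝ) (hζ : 0 < ζ)
    (x y : Fin m → ℝ) (hy : ∀ i, 0 ≤ y i) (hx : ∀ i, ζ < x i)
    (hclose : ∀ i, |y i - x i| ≤ ζ) :
    genEntropy y ≥
      genEntropy x - (∑ i, Real.log ((∑ j, x j) / x i)) * ζ
        - 1 / 2 * ((∑ i, 1 / (x i - ζ)) - m / ((∑ j, x j) / m - ζ)) * ζ ^ 2 ∧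
    0 ≤ (∑ i, 1 / (x i - ζ)) - m / ((∑ j, x j) / m - ζ) ∧
    ((∑ i, 1 / (x i - ζ)) - m / ((∑ j, x j) / m - ζ) = 0 ↔ ∀ i j, x i = x j) :=
  stmt5_general hm ζ hζ x y hx hclose
end

section
/- Let A^E be a real p×m matrix with a vector b^E ∈ ℝ^p all of whose entries are nonzero, and A^I a real q×m matrix with b^I ∈ ℝ^q all of whose entries are nonzero. Define θ_∞ = min( min_i |b^E_i| / ⦀A^E⦀_∞ , min_i |b^I_i| / ⦀A^I⦀_∞ ), where ⦀A⦀_∞ is the maximum over rows of the ℓ₁ norm of the row. Let x ∈ ℝ_{≥0}^m satisfy A^E x = b^E and A^I x ≤ b^I. Then: (1) for any δ > 0, every y ∈ ℝ_{≥0}^m with ‖y − x‖_∞ ≤ δ·θ_∞ satisfies b^E − δ|b^E| ≤ A^E y ≤ b^E + δ|b^E| and A^I y ≤ b^I + δ|b^I| (all inequalities and absolute values componentwise); (2) if δ ≥ 1/(2θ_∞), then the vector [x] obtained by rounding each coordinate of x to a nearest integer satisfies these same δ-relaxed constraints. -/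
open scoped BigOperators

private lemma mulVec_diff_abs_le {n m : ℕ} (A : Matrix (Fin n) (Fin m) ℝ)
    (x y : Fin m → ℝ) (ε : ℝ) (h : ∀ j, |y j - x j| ≤ ε) (i : Fin n) :
    |A.mulVec y i - A.mulVec x i| ≤ ε * ∑ j, |A i j| := by
  have hrw : A.mulVec y i - A.mulVec x i = ∑ j, A i j * (y j - x j) := by
    simp [Matrix.mulVec, dotProduct, mul_sub, Finset.sum_sub_distrib]
  rw [hrw]
  calc |∑ j, A i j * (y j - x j)| ≤ ∑ j, |A i j * (y j - x j)| :=
        Finset.abs_sum_le_sum_abs _ _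
    _ ≤ ∑ j, |A i j| * ε := by
        refine Finset.sum_le_sum fun j _ => ?_
        rw [abs_mul]
        exact mul_le_mul_of_nonneg_left (h j) (abs_nonneg _)
    _ = ε * ∑ j, |A i j| := by rw [Finset.mul_sum]; simp [mul_comm]

private lemma sup_row_pos {n m : ℕ} (A : Matrix (Fin n) (Fin m) ℝ) (hA : A ≠ 0)
    (hn : 0 < n) : 0 < ⨆ i, ∑ j, |A i j| := by
  have : ∃ i j, A i j ≠ 0 := by
    by_contra h
    push_neg at h
    exact hA (by ext i j; simpa using h i j)
  obtain ⟨i, j, hij⟩ := this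
  have hrow : 0 < ∑ j, |A i j| :=
    Finset.sum_pos' (fun k _ => abs_nonneg _) ⟨j, Finset.mem_univ j, abs_pos.mpr hij⟩
  have : Nonempty (Fin n) := ⟨⟨0, hn⟩⟩
  exact lt_of_lt_of_le hrow (le_ciSup (f := fun i => ∑ j, |A i j|) (Set.Finite.bddAbove (Set.finite_range _)) i)

/-- Existence of (nearby / integral) solutions of the `δ`-relaxed constraints:
with `θ_∞ = min( minᵢ|bᴱᵢ|/⦀Aᴱ⦀_∞ , minᵢ|bᴵᵢ|/⦀Aᴵ⦀_∞ )` (row-wise ℓ₁ matrix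
norms), if `x ≥ 0` satisfies `Aᴱx = bᴱ` and `Aᴵx ≤ bᴵ`, then (1) for any
`δ > 0`, every `y ≥ 0` with `‖y − x‖_∞ ≤ δθ_∞` satisfies the `δ`-relaxed
constraints, and (2) if `δ ≥ 1/(2θ_∞)`, the coordinatewise rounding `[x]`
satisfies them as well. -/
theorem stmt7 {m p q : ℕ} (hp : 0 < p) (hq : 0 < q)
    (AE : Matrix (Fin p) (Fin m) ℝ) (bE : Fin p → ℝ) (hbE : ∀ i, bE i ≠ 0)
    (AI : Matrix (Fin q) (Fin m) ℝ) (bI : Fin q → ℝ) (hbI : ∀ i, bI i ≠ 0)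
    (hAE : AE ≠ 0) (hAI : AI ≠ 0)
    (θ : ℝ)
    (hθ : θ = min ((⨅ i, |bE i|) / (⨆ i, ∑ j, |AE i j|))
                  ((⨅ i, |bI i|) / (⨆ i, ∑ j, |AI i j|)))
    (x : Fin m → ℝ) (hx : ∀ i, 0 ≤ x i)
    (hxE : AE.mulVec x = bE) (hxI : ∀ i, AI.mulVec x i ≤ bI i) :
    (∀ δ : ℝ, 0 < δ → ∀ y : Fin m → ℝ, (∀ i, 0 ≤ y i) →
      (∀ i, |y i - x i| ≤ δ * θ) →
      (∀ i, bE i - δ * |bE i| ≤ AE.mulVec y i ∧ AE.mulVec y i ≤ bE i + δ * |bE i|) ∧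
      (∀ i, AI.mulVec y i ≤ bI i + δ * |bI i|)) ∧
    (∀ δ : ℝ, 1 / (2 * θ) ≤ δ →
      (∀ i, bE i - δ * |bE i| ≤ AE.mulVec (fun j => (round (x j) : ℝ)) i ∧
            AE.mulVec (fun j => (round (x j) : ℝ)) i ≤ bE i + δ * |bE i|) ∧
      (∀ i, AI.mulVec (fun j => (round (x j) : ℝ)) i ≤ bI i + δ * |bI i|)) := by
  have hpe : Nonempty (Fin p) := ⟨⟨0, hp⟩⟩
  have hqe : Nonempty (Fin q) := ⟨⟨0, hq⟩⟩
  set sE := ⨆ i, ∑ j, |AE i j| with hsE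
  set sI := ⨆ i, ∑ j, |AI i j| with hsI
  have hsEpos : 0 < sE := sup_row_pos AE hAE hp
  have hsIpos : 0 < sI := sup_row_pos AI hAI hq
  set iE := ⨅ i, |bE i| with hiE
  set iI := ⨅ i, |bI i| with hiI
  have hiEle : ∀ i, iE ≤ |bE i| := fun i =>
    ciInf_le (Set.Finite.bddBelow (Set.finite_range _)) i
  have hiIle : ∀ i, iI ≤ |bI i| := fun i =>
    ciInf_le (Set.Finite.bddBelow (Set.finite_range _)) i
  have hiEpos : 0 < iE := by
    obtain ⟨i, hi⟩ := Finite.exists_min (fun i => |bE i|)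
    have : iE = |bE i| := le_antisymm (hiEle i) (le_ciInf hi)
    rw [this]; exact abs_pos.mpr (hbE i)
  have hiIpos : 0 < iI := by
    obtain ⟨i, hi⟩ := Finite.exists_min (fun i => |bI i|)
    have : iI = |bI i| := le_antisymm (hiIle i) (le_ciInf hi)
    rw [this]; exact abs_pos.mpr (hbI i)
  have hθ0 : 0 ≤ θ := by
    rw [hθ]
    exact le_min (div_nonneg hiEpos.le hsEpos.le) (div_nonneg hiIpos.le hsIpos.le)
  have hθpos : 0 < θ := by
    rw [hθ]
    exact lt_min (div_pos hiEpos hsEpos) (div_pos hiIpos hsIpos)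
  have hθE : θ * sE ≤ iE := by
    have := min_le_left ((⨅ i, |bE i|) / sE) ((⨅ i, |bI i|) / sI)
    rw [← hθ] at this
    exact (le_div_iff₀ hsEpos).mp this
  have hθI : θ * sI ≤ iI := by
    have := min_le_right ((⨅ i, |bE i|) / sE) ((⨅ i, |bI i|) / sI)
    rw [← hθ] at this
    exact (le_div_iff₀ hsIpos).mp this
  have hrowE : ∀ i, ∑ j, |AE i j| ≤ sE := fun i =>
    le_ciSup (f := fun i => ∑ j, |AE i j|) (Set.Finite.bddAbove (Set.finite_range _)) i
  have hrowI : ∀ i, ∑ j, |AI i j| ≤ sI := fun i =>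
    le_ciSup (f := fun i => ∑ j, |AI i j|) (Set.Finite.bddAbove (Set.finite_range _)) i
  have part1 : ∀ δ : ℝ, 0 < δ → ∀ y : Fin m → ℝ, (∀ i, 0 ≤ y i) →
      (∀ i, |y i - x i| ≤ δ * θ) →
      (∀ i, bE i - δ * |bE i| ≤ AE.mulVec y i ∧ AE.mulVec y i ≤ bE i + δ * |bE i|) ∧
      (∀ i, AI.mulVec y i ≤ bI i + δ * |bI i|) := by
    intro δ hδ y _ hyx
    have hδθ : 0 ≤ δ * θ := mul_nonneg hδ.le hθ0
    constructor
    · intro i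
      have h1 : |AE.mulVec y i - AE.mulVec x i| ≤ (δ * θ) * ∑ j, |AE i j| :=
        mulVec_diff_abs_le AE x y (δ * θ) hyx i
      have h2 : (δ * θ) * ∑ j, |AE i j| ≤ δ * |bE i| := by
        calc (δ * θ) * ∑ j, |AE i j| ≤ (δ * θ) * sE :=
              mul_le_mul_of_nonneg_left (hrowE i) hδθ
          _ = δ * (θ * sE) := by ring
          _ ≤ δ * iE := mul_le_mul_of_nonneg_left hθE hδ.le
          _ ≤ δ * |bE i| := mul_le_mul_of_nonneg_left (hiEle i) hδ.le
      have := abs_le.mp (h1.trans h2)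
      rw [hxE] at this
      constructor <;> linarith [this.1, this.2]
    · intro i
      have h1 : |AI.mulVec y i - AI.mulVec x i| ≤ (δ * θ) * ∑ j, |AI i j| :=
        mulVec_diff_abs_le AI x y (δ * θ) hyx i
      have h2 : (δ * θ) * ∑ j, |AI i j| ≤ δ * |bI i| := by
        calc (δ * θ) * ∑ j, |AI i j| ≤ (δ * θ) * sI :=
              mul_le_mul_of_nonneg_left (hrowI i) hδθ
          _ = δ * (θ * sI) := by ring
          _ ≤ δ * iI := mul_le_mul_of_nonneg_left hθI hδ.le
          _ ≤ δ * |bI i| := mul_le_mul_of_nonneg_left (hiIle i) hδ.le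
      have := (abs_le.mp (h1.trans h2)).2
      linarith [hxI i]
  refine ⟨part1, fun δ hδ => ?_⟩
  have hδpos : 0 < δ := lt_of_lt_of_le (by positivity) hδ
  have hhalf : 1 / 2 ≤ δ * θ := by
    rw [div_le_iff₀ (by positivity)] at hδ
    nlinarith
  exact part1 δ hδpos (fun j => (round (x j) : ℝ))
    (fun j => by
      have : (0 : ℤ) ≤ round (x j) := by
        rw [round_eq]
        exact Int.floor_nonneg.mpr (by linarith [hx j])
      show (0:ℝ) ≤ (round (x j) : ℝ); exact_mod_cast this)
    (fun j => le_trans (by simpa [abs_sub_comm] using abs_sub_round (x j)) hhalf)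
end

section
/- Let A^E ∈ ℝ^{p×m}, b^E ∈ ℝ^p (all entries nonzero), A^I ∈ ℝ^{q×m}, b^I ∈ ℝ^q (all entries nonzero). Let x* ∈ ℝ^m have all coordinates positive, put s* = Σ_j x*_j, suppose A^E x* = b^E, and let B ⊆ {1,…,q} be a set of binding rows with A^{BI} x* = b^{BI} (the restriction of A^I, b^I to B). Suppose there exist λ^E ∈ ℝ^p and λ^{BI} ∈ ℝ^B with λ^{BI} ≥ 0 such that x*_j = s*·exp( −( λ^E·A^E_{·j} + λ^{BI}·A^{BI}_{·j} ) ) for every j (the Lagrange/KKT stationarity form). Define G* = G(x*), χ* = x*/s*, and Λ* = |λ^E|·|b^E| + λ^{BI}·|b^{BI}| (componentwise absolute values, then dot products). Then Λ* ≥ G*, and for every δ ≥ 0 and every count vector ν ∈ ℕ^m with b^E − δ|b^E| ≤ A^E ν ≤ b^E + δ|b^E| and A^I ν ≤ b^I + δ|b^I|, writing n = Σ_i ν_i > 0 and f = ν/n, one has G(ν) ≤ G* + Λ*·δ − n·D(f‖χ*), where D(f‖χ*) = Σ_i f_i ln(f_i/χ*_i) is the relative entropy between the probability vectors f and χ*.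 -/
open scoped BigOperators

/-- Effect of tolerances on optimality: if `x* > 0` has the Lagrange/KKT form
`x*ⱼ = s* exp(−(λᴱ·Aᴱ_{·j} + λᴮᴵ·Aᴮᴵ_{·j}))` with `Aᴱx* = bᴱ`, binding rows
`Aᴮᴵx* = bᴮᴵ` and `λᴮᴵ ≥ 0`, then `Λ* = |λᴱ|·|bᴱ| + λᴮᴵ·|bᴮᴵ| ≥ G*`, and every
count vector `ν` satisfying the `δ`-relaxed constraints with sum `n > 0` and
frequency vector `f = ν/n` satisfies `G(ν) ≤ G* + Λ*δ − n D(f‖χ*)`. -/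
theorem stmt8 {m p q : ℕ}
    (AE : Matrix (Fin p) (Fin m) ℝ) (bE : Fin p → ℝ) (hbE : ∀ i, bE i ≠ 0)
    (AI : Matrix (Fin q) (Fin m) ℝ) (bI : Fin q → ℝ) (hbI : ∀ i, bI i ≠ 0)
    (xs : Fin m → ℝ) (hxs : ∀ j, 0 < xs j)
    (ss : ℝ) (hss : ss = ∑ j, xs j)
    (hE : AE.mulVec xs = bE)
    (Bind : Finset (Fin q)) (hbind : ∀ i ∈ Bind, AI.mulVec xs i = bI i)
    (lamE : Fin p → ℝ) (lamBI : Fin q → ℝ) (hlam : ∀ i ∈ Bind, 0 ≤ lamBI i)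
    (hstat : ∀ j, xs j =
      ss * Real.exp (-(∑ i, lamE i * AE i j + ∑ i ∈ Bind, lamBI i * AI i j)))
    (Gs Λs : ℝ) (hGs : Gs = genEntropy xs)
    (hΛ : Λs = (∑ i, |lamE i| * |bE i|) + ∑ i ∈ Bind, lamBI i * |bI i|) :
    Gs ≤ Λs ∧
    ∀ δ : ℝ, 0 ≤ δ → ∀ ν : Fin m → ℕ,
      (∀ i, bE i - δ * |bE i| ≤ AE.mulVec (fun j => (ν j : ℝ)) i ∧
            AE.mulVec (fun j => (ν j : ℝ)) i ≤ bE i + δ * |bE i|) →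
      (∀ i, AI.mulVec (fun j => (ν j : ℝ)) i ≤ bI i + δ * |bI i|) →
      ∀ n : ℕ, n = ∑ i, ν i → 0 < n →
      genEntropy (fun i => (ν i : ℝ)) ≤
        Gs + Λs * δ -
          n * ∑ i, ((ν i : ℝ) / n) * Real.log (((ν i : ℝ) / n) / (xs i / ss)) := by
  rcases Nat.eq_zero_or_pos m with hm | hm
  · subst hm
    constructor
    · rw [hGs, hΛ]
      have h1 : (0:ℝ) ≤ ∑ i, |lamE i| * |bE i| :=
        Finset.sum_nonneg fun i _ => mul_nonneg (abs_nonneg _) (abs_nonneg _)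
      have h2 : (0:ℝ) ≤ ∑ i ∈ Bind, lamBI i * |bI i| :=
        Finset.sum_nonneg fun i hi => mul_nonneg (hlam i hi) (abs_nonneg _)
      simp [genEntropy]
      linarith
    · intro δ hδ ν _ _ n hn hnpos
      simp at hn
      omega
  -- main case m > 0
  set c : Fin m → ℝ := fun j => ∑ i, lamE i * AE i j + ∑ i ∈ Bind, lamBI i * AI i j with hc
  have hssS : ss = ∑ j, xs j := hss
  have hsspos : 0 < ss := by
    have j0 : Fin m := ⟨0, hm⟩
    have := hstat j0
    nlinarith [hxs j0, Real.exp_pos (-(c j0)), this]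
  have log_xs : ∀ j, Real.log (xs j) = Real.log ss - c j := by
    intro j
    rw [hstat j, Real.log_mul (ne_of_gt hsspos) (Real.exp_ne_zero _), Real.log_exp]
    ring
  have sum_c_dot : ∀ v : Fin m → ℝ, ∑ j, v j * c j
      = ∑ i, lamE i * (AE.mulVec v i) + ∑ i ∈ Bind, lamBI i * (AI.mulVec v i) := by
    intro v
    simp only [hc, Matrix.mulVec, dotProduct, mul_add, Finset.sum_add_distrib,
      Finset.mul_sum]
    congr 1
    · rw [Finset.sum_comm]
      exact Finset.sum_congr rfl fun i _ => Finset.sum_congr rfl fun j _ => by ring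
    · rw [Finset.sum_comm]
      exact Finset.sum_congr rfl fun i _ => Finset.sum_congr rfl fun j _ => by ring
  have Gs_eq : Gs = ∑ j, xs j * c j := by
    have h : ∑ j, xs j * Real.log (xs j)
        = (∑ j, xs j) * Real.log ss - ∑ j, xs j * c j := by
      rw [Finset.sum_mul, ← Finset.sum_sub_distrib]
      exact Finset.sum_congr rfl fun j _ => by rw [log_xs j]; ring
    rw [hGs]
    simp only [genEntropy, ← hssS, h]
    ring
  have Gs_val : Gs = ∑ i, lamE i * bE i + ∑ i ∈ Bind, lamBI i * bI i := by
    rw [Gs_eq, sum_c_dot, hE]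
    congr 1
    exact Finset.sum_congr rfl fun i hi => by rw [hbind i hi]
  constructor
  · rw [Gs_val, hΛ]
    apply add_le_add
    · apply Finset.sum_le_sum
      intro i _
      calc lamE i * bE i ≤ |lamE i * bE i| := le_abs_self _
        _ = |lamE i| * |bE i| := abs_mul _ _
    · apply Finset.sum_le_sum
      intro i hi
      exact mul_le_mul_of_nonneg_left (le_abs_self _) (hlam i hi)
  · intro δ hδ ν hEc hIc n hn hnpos
    set νr : Fin m → ℝ := fun j => (ν j : ℝ) with hνr
    have hnR : (n : ℝ) = ∑ j, νr j := by
      rw [hn]; push_cast; rfl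
    have hnpos' : (0:ℝ) < n := by exact_mod_cast hnpos
    have hnne : (n:ℝ) ≠ 0 := ne_of_gt hnpos'
    -- n * D = ∑ νr log νr - n log n + ∑ νr c
    have hD : (n:ℝ) * ∑ i, (νr i / n) * Real.log ((νr i / n) / (xs i / ss))
        = ∑ i, νr i * Real.log (νr i) - (n:ℝ) * Real.log n + ∑ i, νr i * c i := by
      rw [Finset.mul_sum]
      have : ∀ i ∈ (Finset.univ : Finset (Fin m)),
          (n:ℝ) * ((νr i / n) * Real.log ((νr i / n) / (xs i / ss)))
          = νr i * Real.log (νr i) - νr i * Real.log n + νr i * c i := by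
        intro i _
        rcases eq_or_ne (ν i) 0 with h0 | h0
        · simp [hνr, h0]
        · have hν : (0:ℝ) < νr i := by
            simp only [hνr]; exact_mod_cast Nat.pos_of_ne_zero h0
          have hx := hxs i
          rw [Real.log_div (by positivity) (by positivity),
            Real.log_div (ne_of_gt hν) hnne,
            Real.log_div (ne_of_gt hx) (ne_of_gt hsspos),
            log_xs i]
          field_simp
          ring
      rw [Finset.sum_congr rfl this, Finset.sum_add_distrib, Finset.sum_sub_distrib,
        ← Finset.sum_mul, ← hnR]
    have hGν : genEntropy νr = -(∑ i, νr i * Real.log (νr i)) + (n:ℝ) * Real.log n := by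
      simp only [genEntropy, ← hnR]
    -- bound ∑ νr c
    have hbound : ∑ j, νr j * c j ≤ Gs + Λs * δ := by
      rw [sum_c_dot, Gs_val, hΛ]
      have hE' : ∑ i, lamE i * (AE.mulVec νr i)
          ≤ ∑ i, (lamE i * bE i + |lamE i| * |bE i| * δ) := by
        apply Finset.sum_le_sum
        intro i _
        obtain ⟨hlo, hhi⟩ := hEc i
        have habs : |AE.mulVec νr i - bE i| ≤ δ * |bE i| := abs_le.mpr ⟨by linarith, by linarith⟩
        have : lamE i * (AE.mulVec νr i - bE i) ≤ |lamE i| * (δ * |bE i|) := by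
          calc lamE i * (AE.mulVec νr i - bE i) ≤ |lamE i * (AE.mulVec νr i - bE i)| :=
              le_abs_self _
            _ = |lamE i| * |AE.mulVec νr i - bE i| := abs_mul _ _
            _ ≤ |lamE i| * (δ * |bE i|) :=
              mul_le_mul_of_nonneg_left habs (abs_nonneg _)
        nlinarith
      have hI' : ∑ i ∈ Bind, lamBI i * (AI.mulVec νr i)
          ≤ ∑ i ∈ Bind, (lamBI i * bI i + lamBI i * |bI i| * δ) := by
        apply Finset.sum_le_sum
        intro i hi
        have := mul_le_mul_of_nonneg_left (hIc i) (hlam i hi)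
        nlinarith
      calc _ ≤ (∑ i, (lamE i * bE i + |lamE i| * |bE i| * δ))
            + ∑ i ∈ Bind, (lamBI i * bI i + lamBI i * |bI i| * δ) := add_le_add hE' hI'
        _ = _ := by
          rw [Finset.sum_add_distrib, Finset.sum_add_distrib, ← Finset.sum_mul,
            ← Finset.sum_mul]
          ring
    linarith [hD, hGν, hbound]
end

section
/- Under the same hypotheses as the preceding Lagrange-form lemma (x* > 0 componentwise with sum s*, satisfying A^E x* = b^E, binding rows A^{BI} x* = b^{BI}, multipliers λ^E and λ^{BI} ≥ 0 with x*_j = s*·exp(−(λ^E·A^E_{·j} + λ^{BI}·A^{BI}_{·j})), G* = G(x*), χ* = x*/s*, Λ* = |λ^E|·|b^E| + λ^{BI}·|b^{BI}|), define β* = max over subsets I ⊆ {1,…,m} of min( Σ_{i∈I} χ*_i , 1 − Σ_{i∈I} χ*_i ), and γ* = (1/(4(1−2β*)))·ln((1−β*)/β*) when β* < 1/2, with γ* = 1/2 when β* = 1/2. Then γ* ≥ 1/2 and (1 − max_i χ*_i)/2 ≤ β* ≤ 1/2; and for every δ ≥ 0, ϑ > 0, and every count vector ν ∈ ℕ^m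 satisfying the δ-relaxed constraints (b^E − δ|b^E| ≤ A^E ν ≤ b^E + δ|b^E|, A^I ν ≤ b^I + δ|b^I|) with n = Σ_i ν_i: if ‖ν − x*‖₁ > |n − s*| + min(n, s*)·ϑ, then G(ν) ≤ G* + Λ*·δ − γ*·ϑ²·n. -/
open Real Set

/-- `2 artanh t / t = (log (1 + t) - log (1 - t)) / t` for `0 < |t| < 1` (see `artanhRatio_mul`),
and `2` at `t = 0`. As a series in `t²` with positive coefficients it is monotone in `|t|` and lies
between `2` and `2 / (1 - t²)` termwise. -/
noncomputable def artanhRatio (t : ℝ) : ℝ := ∑' k : ℕ, 2 / (2 * k + 1) * (t ^ 2) ^ k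

lemma artanhRatio_term_le (t : ℝ) (k : ℕ) : 2 / (2 * k + 1) * (t ^ 2) ^ k ≤ 2 * (t ^ 2) ^ k := by
  gcongr
  exact div_le_self zero_le_two (by linarith [k.cast_nonneg (α := ℝ)])

lemma hasSum_artanhRatio {t : ℝ} (ht : |t| < 1) :
    HasSum (fun k : ℕ => 2 / (2 * k + 1) * (t ^ 2) ^ k) (artanhRatio t) := by
  refine (Summable.of_nonneg_of_le (fun k => by positivity) (artanhRatio_term_le t) ?_).hasSum
  exact ((hasSum_geometric_of_lt_one (sq_nonneg t) ((sq_lt_one_iff_abs_lt_one t).2 ht)).mul_left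
    2).summable

lemma artanhRatio_mul {t : ℝ} (ht : |t| < 1) :
    artanhRatio t * t = log (1 + t) - log (1 - t) := by
  have hterm : (fun k : ℕ => 2 / (2 * k + 1) * (t ^ 2) ^ k * t) =
      fun k : ℕ => 2 * (1 / (2 * k + 1)) * t ^ (2 * k + 1) := by
    funext k
    rw [← pow_mul]
    ring
  exact ((hasSum_artanhRatio ht).mul_right t).unique
    (hterm ▸ hasSum_log_sub_log_of_abs_lt_one ht)

lemma two_le_artanhRatio {t : ℝ} (ht : |t| < 1) : 2 ≤ artanhRatio t := by
  simpa using le_hasSum (hasSum_artanhRatio ht) 0 (fun k _ => by positivity)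

lemma artanhRatio_le {t : ℝ} (ht : |t| < 1) : artanhRatio t ≤ 2 / (1 - t ^ 2) := by
  have hgeom := (hasSum_geometric_of_lt_one (sq_nonneg t)
    ((sq_lt_one_iff_abs_lt_one t).2 ht)).mul_left 2
  exact hasSum_le (artanhRatio_term_le t) (hasSum_artanhRatio ht) hgeom

lemma artanhRatio_nonneg (t : ℝ) : 0 ≤ artanhRatio t := tsum_nonneg fun k => by positivity

lemma artanhRatio_zero : artanhRatio 0 = 2 :=
  le_antisymm (by simpa using artanhRatio_le (t := 0) (by simp))
    (two_le_artanhRatio (by simp))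

lemma artanhRatio_le_artanhRatio {s t : ℝ} (hst : |s| ≤ |t|) (ht : |t| < 1) :
    artanhRatio s ≤ artanhRatio t := by
  refine hasSum_le (fun k => ?_) (hasSum_artanhRatio (hst.trans_lt ht)) (hasSum_artanhRatio ht)
  have := sq_le_sq.2 hst
  gcongr

lemma artanhRatio_neg (t : ℝ) : artanhRatio (-t) = artanhRatio t := by
  simp [artanhRatio]

noncomputable def binKL (p q : ℝ) : ℝ :=
  p * (log p - log q) + (1 - p) * (log (1 - p) - log (1 - q))

lemma binKL_self (p : ℝ) : binKL p p = 0 := by simp [binKL]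

lemma binKL_one_sub_one_sub (p q : ℝ) : binKL (1 - p) (1 - q) = binKL p q := by
  simp only [binKL, sub_sub_cancel]
  ring

lemma hasDerivAt_log_sub_log_one_sub {x : ℝ} (hx : x ∈ Ioo 0 1) :
    HasDerivAt (fun y => log y - log (1 - y)) (x⁻¹ + (1 - x)⁻¹) x := by
  have h1 : 1 - x ≠ 0 := by linarith [hx.2]
  exact ((hasDerivAt_log hx.1.ne').sub (((hasDerivAt_id' x).const_sub 1).log h1)).congr_deriv
    (by field_simp; ring)

lemma hasDerivAt_binKL {x : ℝ} (hx : x ∈ Ioo 0 1) (q : ℝ) :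
    HasDerivAt (fun y => binKL y q) (log x - log (1 - x) - (log q - log (1 - q))) x := by
  have h1 : 1 - x ≠ 0 := by linarith [hx.2]
  have hfun : (fun y => binKL y q) = fun y =>
      (y * log y - y * log q) + ((1 - y) * log (1 - y) - (1 - y) * log (1 - q)) := by
    funext y
    simp only [binKL]
    ring
  have hx1 := (hasDerivAt_id' x).const_sub 1
  rw [hfun]
  exact (((hasDerivAt_mul_log hx.1.ne').sub ((hasDerivAt_id' x).mul_const (log q))).add
    (((hasDerivAt_mul_log h1).comp x hx1).sub (hx1.mul_const (log (1 - q))))).congr_deriv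
    (by ring)

lemma convexOn_Icc_of_hasDerivAt2 {f f' f'' : ℝ → ℝ} {u v : ℝ}
    (hf : ContinuousOn f (Icc u v)) (hf' : ∀ x ∈ Ioo u v, HasDerivAt f (f' x) x)
    (hf'' : ∀ x ∈ Ioo u v, HasDerivAt f' (f'' x) x) (h : ∀ x ∈ Ioo u v, 0 ≤ f'' x) :
    ConvexOn ℝ (Icc u v) f := by
  refine convexOn_of_hasDerivWithinAt2_nonneg (f' := f') (f'' := f'') (convex_Icc u v) hf
    ?_ ?_ ?_ <;> rw [interior_Icc]
  exacts [fun x hx => (hf' x hx).hasDerivWithinAt, fun x hx => (hf'' x hx).hasDerivWithinAt, h]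

lemma concaveOn_Icc_of_hasDerivAt2 {f f' f'' : ℝ → ℝ} {u v : ℝ}
    (hf : ContinuousOn f (Icc u v)) (hf' : ∀ x ∈ Ioo u v, HasDerivAt f (f' x) x)
    (hf'' : ∀ x ∈ Ioo u v, HasDerivAt f' (f'' x) x) (h : ∀ x ∈ Ioo u v, f'' x ≤ 0) :
    ConcaveOn ℝ (Icc u v) f := by
  refine concaveOn_of_hasDerivWithinAt2_nonpos (f' := f') (f'' := f'') (convex_Icc u v) hf
    ?_ ?_ ?_ <;> rw [interior_Icc]
  exacts [fun x hx => (hf' x hx).hasDerivWithinAt, fun x hx => (hf'' x hx).hasDerivWithinAt, h]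

lemma ConvexOn.nonneg_of_hasDerivAt_eq_zero {S : Set ℝ} {f : ℝ → ℝ} {x y : ℝ}
    (hf : ConvexOn ℝ S f) (hx : x ∈ S) (hy : y ∈ S) (hfx : f x = 0) (hf' : HasDerivAt f 0 x) :
    0 ≤ f y := by
  rcases lt_trichotomy x y with hxy | rfl | hyx
  · have := hf.le_slope_of_hasDerivAt hx hy hxy hf'
    rw [slope_def_field, hfx, le_div_iff₀ (sub_pos.2 hxy)] at this
    linarith
  · exact hfx.ge
  · have := hf.slope_le_of_hasDerivAt hy hx hyx hf'
    rw [slope_def_field, hfx, div_le_iff₀ (sub_pos.2 hyx)] at this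
    linarith

lemma nonneg_of_convex_concave_convex {g : ℝ → ℝ} {u a b v q r x : ℝ} (hab : a ≤ b)
    (hl : ConvexOn ℝ (Icc u a) g) (hm : ConcaveOn ℝ (Icc a b) g) (hr : ConvexOn ℝ (Icc b v) g)
    (hq : q ∈ Icc u a) (hgq : g q = 0) (hg'q : HasDerivAt g 0 q)
    (hr' : r ∈ Icc b v) (hgr : g r = 0) (hg'r : HasDerivAt g 0 r) (hx : x ∈ Icc u v) :
    0 ≤ g x := by
  have ha : 0 ≤ g a := hl.nonneg_of_hasDerivAt_eq_zero hq ⟨hq.1.trans hq.2, le_rfl⟩ hgq hg'q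
  have hb : 0 ≤ g b := hr.nonneg_of_hasDerivAt_eq_zero hr' ⟨le_rfl, hr'.1.trans hr'.2⟩ hgr hg'r
  rcases le_total x a with hxa | hax
  · exact hl.nonneg_of_hasDerivAt_eq_zero hq ⟨hx.1, hxa⟩ hgq hg'q
  rcases le_total x b with hxb | hbx
  · exact (le_min ha hb).trans (hm.min_le_of_mem_Icc ⟨le_rfl, hab⟩ ⟨hab, le_rfl⟩ ⟨hax, hxb⟩)
  · exact hr.nonneg_of_hasDerivAt_eq_zero hr' ⟨hbx, hx.2⟩ hgr hg'r

lemma continuous_binKL (q : ℝ) : Continuous fun p => binKL p q := by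
  have h : Continuous fun p : ℝ => (1 - p) * log (1 - p) :=
    continuous_mul_log.comp (continuous_const.sub continuous_id)
  simp only [binKL, mul_sub]
  exact (continuous_mul_log.sub (by fun_prop)).add (h.sub (by fun_prop))

lemma hasDerivAt_binKL_sub_sq {x : ℝ} (hx : x ∈ Ioo 0 1) (q c : ℝ) :
    HasDerivAt (fun y => binKL y q - c * (y - q) ^ 2)
      (log x - log (1 - x) - (log q - log (1 - q)) - 2 * c * (x - q)) x :=
  ((hasDerivAt_binKL hx q).sub ((((hasDerivAt_id' x).sub_const q).pow 2).const_mul c)).congr_deriv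
    (by ring)

lemma hasDerivAt_deriv_binKL_sub_sq {x : ℝ} (hx : x ∈ Ioo 0 1) (q c : ℝ) :
    HasDerivAt (fun y => log y - log (1 - y) - (log q - log (1 - q)) - 2 * c * (y - q))
      ((1 - 2 * c * (x * (1 - x))) / (x * (1 - x))) x := by
  have : 1 - x ≠ 0 := by linarith [hx.2]
  refine (((hasDerivAt_log_sub_log_one_sub hx).sub_const _).sub
    (((hasDerivAt_id' x).sub_const q).const_mul (2 * c))).congr_deriv ?_
  field_simp [hx.1.ne']
  ring

section BinaryInequality

variable {u v q c : ℝ}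

lemma convexOn_binKL_sub_sq (hu : 0 ≤ u) (hv : v ≤ 1)
    (h : ∀ x ∈ Ioo u v, 2 * c * (x * (1 - x)) ≤ 1) :
    ConvexOn ℝ (Icc u v) fun y => binKL y q - c * (y - q) ^ 2 := by
  have hsub : ∀ x ∈ Ioo u v, x ∈ Ioo (0 : ℝ) 1 := fun x hx =>
    ⟨hu.trans_lt hx.1, hx.2.trans_le hv⟩
  refine convexOn_Icc_of_hasDerivAt2 ((continuous_binKL q).sub (by fun_prop)).continuousOn
    (fun x hx => hasDerivAt_binKL_sub_sq (hsub x hx) q c)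
    (fun x hx => hasDerivAt_deriv_binKL_sub_sq (hsub x hx) q c) fun x hx => ?_
  have hx' := hsub x hx
  exact div_nonneg (by linarith [h x hx]) (mul_pos hx'.1 (by linarith [hx'.2])).le

lemma concaveOn_binKL_sub_sq (hu : 0 ≤ u) (hv : v ≤ 1)
    (h : ∀ x ∈ Ioo u v, 1 ≤ 2 * c * (x * (1 - x))) :
    ConcaveOn ℝ (Icc u v) fun y => binKL y q - c * (y - q) ^ 2 := by
  have hsub : ∀ x ∈ Ioo u v, x ∈ Ioo (0 : ℝ) 1 := fun x hx =>
    ⟨hu.trans_lt hx.1, hx.2.trans_le hv⟩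
  refine concaveOn_Icc_of_hasDerivAt2 ((continuous_binKL q).sub (by fun_prop)).continuousOn
    (fun x hx => hasDerivAt_binKL_sub_sq (hsub x hx) q c)
    (fun x hx => hasDerivAt_deriv_binKL_sub_sq (hsub x hx) q c) fun x hx => ?_
  have hx' := hsub x hx
  exact div_nonpos_of_nonpos_of_nonneg (by linarith [h x hx])
    (mul_pos hx'.1 (by linarith [hx'.2])).le

lemma exists_two_mul_mul_one_sub_eq_one (hc : 2 ≤ c) :
    ∃ a ≤ 1 / 2, 2 * c * (a * (1 - a)) = 1 := by
  have hsq : √(1 - 2 / c) ^ 2 = 1 - 2 / c :=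
    sq_sqrt (by rw [sub_nonneg, div_le_one (by linarith)]; exact hc)
  refine ⟨(1 - √(1 - 2 / c)) / 2, by linarith [sqrt_nonneg (1 - 2 / c)], ?_⟩
  have : (1 - √(1 - 2 / c)) / 2 * (1 - (1 - √(1 - 2 / c)) / 2) = (1 - √(1 - 2 / c) ^ 2) / 4 := by
    ring
  rw [this, hsq]
  field_simp
  ring

/-- The hypotheses on `c` make `1 - q` a second double zero of `binKL · q - c (· - q)²`, besides
`q`; the points `a ≤ 1 - a` where `2 c a (1 - a) = 1` cut `[0, 1]` into convex, concave and
convex pieces. -/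
lemma mul_sq_le_binKL_of_le_half (hq : 0 < q) (hq2 : q ≤ 1 / 2) (hc : 2 ≤ c)
    (hcq : c * (1 - 2 * q) = log (1 - q) - log q) (hcq' : 2 * c * (q * (1 - q)) ≤ 1)
    {p : ℝ} (hp : p ∈ Icc 0 1) : c * (p - q) ^ 2 ≤ binKL p q := by
  obtain ⟨a, ha2, ha⟩ := exists_two_mul_mul_one_sub_eq_one hc
  have hqa : q ≤ a := by
    by_contra! h
    have : a * (1 - a) < q * (1 - q) := by nlinarith
    nlinarith
  have h2c : 0 ≤ 2 * c := by linarith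
  have hl : ConvexOn ℝ (Icc 0 a) fun y => binKL y q - c * (y - q) ^ 2 := by
    refine convexOn_binKL_sub_sq le_rfl (by linarith) fun x hx => ?_
    have : x * (1 - x) ≤ a * (1 - a) := by nlinarith [hx.1, hx.2]
    nlinarith
  have hm : ConcaveOn ℝ (Icc a (1 - a)) fun y => binKL y q - c * (y - q) ^ 2 := by
    refine concaveOn_binKL_sub_sq (by linarith) (by linarith) fun x hx => ?_
    have : a * (1 - a) ≤ x * (1 - x) := by nlinarith [hx.1, hx.2]
    nlinarith
  have hr : ConvexOn ℝ (Icc (1 - a) 1) fun y => binKL y q - c * (y - q) ^ 2 := by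
    refine convexOn_binKL_sub_sq (by linarith) le_rfl fun x hx => ?_
    have : x * (1 - x) ≤ a * (1 - a) := by nlinarith [hx.1, hx.2]
    nlinarith
  have hg'q := hasDerivAt_binKL_sub_sq ⟨hq, by linarith⟩ q c
  have hg'r := hasDerivAt_binKL_sub_sq (x := 1 - q) ⟨by linarith, by linarith⟩ q c
  have := nonneg_of_convex_concave_convex (by linarith) hl hm hr ⟨hq.le, hqa⟩
    (by simp [binKL_self]) (hg'q.congr_deriv (by ring)) ⟨by linarith, by linarith⟩
    (by simp only [binKL, sub_sub_cancel]; linear_combination (-(1 - 2 * q)) * hcq)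
    (hg'r.congr_deriv (by simp only [sub_sub_cancel]; linear_combination (-2) * hcq)) hp
  simpa using this

end BinaryInequality

lemma artanhRatio_mul_sq_le_binKL {p q : ℝ} (hq : q ∈ Ioo 0 1) (hp : p ∈ Icc 0 1) :
    artanhRatio (1 - 2 * q) * (p - q) ^ 2 ≤ binKL p q := by
  wlog hq2 : q ≤ 1 / 2 generalizing p q
  · have := this (p := 1 - p) (q := 1 - q) ⟨by linarith [hq.2], by linarith [hq.1]⟩
      ⟨by linarith [hp.2], by linarith [hp.1]⟩ (by linarith)
    rwa [binKL_one_sub_one_sub, show 1 - 2 * (1 - q) = -(1 - 2 * q) by ring, artanhRatio_neg,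
      show 1 - p - (1 - q) = -(p - q) by ring, neg_sq] at this
  have ht : |1 - 2 * q| < 1 := abs_lt.2 ⟨by linarith [hq.1], by linarith [hq.1]⟩
  refine mul_sq_le_binKL_of_le_half hq.1 hq2 (two_le_artanhRatio ht) ?_ ?_ hp
  · rw [artanhRatio_mul ht, show 1 + (1 - 2 * q) = 2 * (1 - q) by ring,
      show 1 - (1 - 2 * q) = 2 * q by ring, log_mul two_ne_zero (by linarith [hq.2]),
      log_mul two_ne_zero hq.1.ne']
    ring
  · have h := artanhRatio_le ht
    have hpos : 0 < 1 - (1 - 2 * q) ^ 2 := by nlinarith [hq.1]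
    rw [le_div_iff₀ hpos] at h
    nlinarith

-- `log z ≥ 1 - 1/z` at `z = a B / (b A)`
lemma mul_log_sub_log_add_sub_le {a b A B : ℝ} (ha : 0 ≤ a) (hb : 0 < b) (hA : 0 < A)
    (hB : 0 < B) : a * (log A - log B) + (a - A / B * b) ≤ a * (log a - log b) := by
  rcases ha.eq_or_lt with rfl | ha
  · simp only [zero_mul, zero_sub, zero_add, neg_nonpos]
    positivity
  have h := one_sub_inv_le_log_of_pos (show 0 < a * B / (b * A) by positivity)
  rw [inv_div, log_div (by positivity) (by positivity), log_mul ha.ne' hB.ne',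
    log_mul hb.ne' hA.ne'] at h
  have h' := mul_le_mul_of_nonneg_left h ha.le
  rw [mul_sub, mul_one, show a * (b * A / (a * B)) = A / B * b by field_simp] at h'
  linarith

lemma sum_mul_log_sub_log_le {ι : Type*} (s : Finset ι) {a b : ι → ℝ} (ha : ∀ j ∈ s, 0 ≤ a j)
    (hb : ∀ j ∈ s, 0 < b j) :
    (∑ j ∈ s, a j) * (log (∑ j ∈ s, a j) - log (∑ j ∈ s, b j)) ≤
      ∑ j ∈ s, a j * (log (a j) - log (b j)) := by
  rcases (Finset.sum_nonneg ha).eq_or_lt with hA | hA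
  · rw [← hA, zero_mul, Finset.sum_eq_zero fun j hj => by
      rw [(Finset.sum_eq_zero_iff_of_nonneg ha).1 hA.symm j hj, zero_mul]]
  have hB : 0 < ∑ j ∈ s, b j := Finset.sum_pos hb (Finset.nonempty_of_sum_ne_zero hA.ne')
  calc (∑ j ∈ s, a j) * (log (∑ j ∈ s, a j) - log (∑ j ∈ s, b j))
      = ∑ j ∈ s, (a j * (log (∑ j ∈ s, a j) - log (∑ j ∈ s, b j)) +
          (a j - (∑ j ∈ s, a j) / (∑ j ∈ s, b j) * b j)) := by
        rw [Finset.sum_add_distrib, Finset.sum_sub_distrib, ← Finset.sum_mul, ← Finset.mul_sum,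
          div_mul_cancel₀ _ hB.ne', sub_self, add_zero]
    _ ≤ ∑ j ∈ s, a j * (log (a j) - log (b j)) :=
        Finset.sum_le_sum fun j hj => mul_log_sub_log_add_sub_le (ha j hj) (hb j hj) hA hB

noncomputable def klSum {ι : Type*} [Fintype ι] (p χ : ι → ℝ) : ℝ :=
  ∑ j, p j * (log (p j) - log (χ j))

section Pinsker

variable {ι : Type*} [Fintype ι] {p χ : ι → ℝ}

lemma binKL_le_klSum [DecidableEq ι] (A : Finset ι) (hp : ∀ j, 0 ≤ p j) (hχ : ∀ j, 0 < χ j)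
    (hps : ∑ j, p j = 1) (hχs : ∑ j, χ j = 1) :
    binKL (∑ j ∈ A, p j) (∑ j ∈ A, χ j) ≤ klSum p χ := by
  have hpc : ∑ j ∈ Aᶜ, p j = 1 - ∑ j ∈ A, p j := by
    rw [← hps, ← Finset.sum_add_sum_compl A]; ring
  have hχc : ∑ j ∈ Aᶜ, χ j = 1 - ∑ j ∈ A, χ j := by
    rw [← hχs, ← Finset.sum_add_sum_compl A]; ring
  have hA := sum_mul_log_sub_log_le A (fun j _ => hp j) (fun j _ => hχ j)
  have hAc := sum_mul_log_sub_log_le Aᶜ (fun j _ => hp j) (fun j _ => hχ j)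
  rw [hpc, hχc] at hAc
  rw [klSum, ← Finset.sum_add_sum_compl A]
  exact add_le_add hA hAc

lemma sum_abs_sub_eq_two_mul_sum_filter [DecidablePred fun j => χ j < p j]
    (h : ∑ j, p j = ∑ j, χ j) :
    ∑ j, |p j - χ j| = 2 * ∑ j with χ j < p j, (p j - χ j) := by
  have htot : ∑ j with χ j < p j, (p j - χ j) + ∑ j with ¬χ j < p j, (p j - χ j) = 0 := by
    rw [Finset.sum_filter_add_sum_filter_not, Finset.sum_sub_distrib, h, sub_self]
  rw [← Finset.sum_filter_add_sum_filter_not _ fun j => χ j < p j]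
  rw [Finset.sum_congr rfl fun j hj => abs_of_pos (sub_pos.2 (Finset.mem_filter.1 hj).2),
    Finset.sum_congr rfl fun j hj =>
      abs_of_nonpos (sub_nonpos.2 (not_lt.1 (Finset.mem_filter.1 hj).2)),
    Finset.sum_neg_distrib]
  linarith

lemma artanhRatio_mul_sq_le_klSum (hp : ∀ j, 0 ≤ p j) (hχ : ∀ j, 0 < χ j)
    (hps : ∑ j, p j = 1) (hχs : ∑ j, χ j = 1) {β : ℝ} (hβ : β ≤ 1 / 2)
    (hsplit : ∀ I : Finset ι, min (∑ i ∈ I, χ i) (1 - ∑ i ∈ I, χ i) ≤ β) :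
    artanhRatio (1 - 2 * β) / 4 * (∑ j, |p j - χ j|) ^ 2 ≤ klSum p χ := by
  classical
  set A := Finset.univ.filter fun j => χ j < p j
  set P := ∑ j ∈ A, p j
  set Q := ∑ j ∈ A, χ j
  have hTV : ∑ j, |p j - χ j| = 2 * (P - Q) := by
    rw [sum_abs_sub_eq_two_mul_sum_filter (hps.trans hχs.symm), Finset.sum_sub_distrib]
  have hKL : binKL P Q ≤ klSum p χ := binKL_le_klSum A hp hχ hps hχs
  have hQP : Q ≤ P := by
    linarith [Finset.sum_nonneg fun j (_ : j ∈ Finset.univ) => abs_nonneg (p j - χ j)]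
  rcases hQP.eq_or_lt with hPQ | hQP
  · rw [hTV, hPQ, sub_self]
    rw [hPQ, binKL_self] at hKL
    simpa using hKL
  have hAne : A.Nonempty := Finset.nonempty_iff_ne_empty.2 fun h => by simp [P, Q, h] at hQP
  have hP1 : P ≤ 1 := by
    rw [← hps]
    exact Finset.sum_le_sum_of_subset_of_nonneg (Finset.subset_univ A) fun j _ _ => hp j
  have hQ : Q ∈ Ioo 0 1 := ⟨Finset.sum_pos (fun j _ => hχ j) hAne, hQP.trans_le hP1⟩
  have hmono : artanhRatio (1 - 2 * β) ≤ artanhRatio (1 - 2 * Q) := by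
    refine artanhRatio_le_artanhRatio ?_ (abs_lt.2 ⟨by linarith [hQ.2], by linarith [hQ.1]⟩)
    rw [abs_of_nonneg (by linarith), le_abs]
    rcases min_le_iff.1 (hsplit A) with h | h
    exacts [Or.inl (by linarith), Or.inr (by linarith)]
  calc artanhRatio (1 - 2 * β) / 4 * (∑ j, |p j - χ j|) ^ 2
      = artanhRatio (1 - 2 * β) * (P - Q) ^ 2 := by rw [hTV]; ring
    _ ≤ artanhRatio (1 - 2 * Q) * (P - Q) ^ 2 := by gcongr
    _ ≤ binKL P Q := artanhRatio_mul_sq_le_binKL hQ ⟨hQ.1.le.trans hQP.le, hP1⟩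
    _ ≤ klSum p χ := hKL

end Pinsker

noncomputable def splitBalance {ι : Type*} [Fintype ι] (χ : ι → ℝ) : ℝ :=
  (Finset.univ : Finset ι).powerset.sup' (Finset.powerset_nonempty _)
    fun I => min (∑ i ∈ I, χ i) (1 - ∑ i ∈ I, χ i)

section SplitBalance

variable {ι : Type*} [Fintype ι] (χ : ι → ℝ)

lemma le_splitBalance (I : Finset ι) :
    min (∑ i ∈ I, χ i) (1 - ∑ i ∈ I, χ i) ≤ splitBalance χ :=
  Finset.le_sup' (fun I : Finset ι => min (∑ i ∈ I, χ i) (1 - ∑ i ∈ I, χ i))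
    (Finset.mem_powerset.2 (Finset.subset_univ I))

lemma splitBalance_le_half : splitBalance χ ≤ 1 / 2 :=
  Finset.sup'_le _ _ fun I _ => by
    rcases le_total (∑ i ∈ I, χ i) (1 / 2) with h | h
    exacts [(min_le_left _ _).trans h, (min_le_right _ _).trans (by linarith)]

variable {χ}

lemma splitBalance_pos [DecidableEq ι] (hχ : ∀ i, 0 ≤ χ i) (hχs : ∑ i, χ i = 1) {i j : ι}
    (hij : i ≠ j) (hi : 0 < χ i) (hj : 0 < χ j) : 0 < splitBalance χ := by
  have hpair : χ i + χ j ≤ 1 := by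
    rw [← Finset.sum_pair hij, ← hχs]
    exact Finset.sum_le_univ_sum_of_nonneg hχ
  refine lt_of_lt_of_le ?_ (le_splitBalance χ {i})
  rw [Finset.sum_singleton]
  exact lt_min hi (by linarith)

/-- A maximal subset `I` with `χ(I) ≤ (1 + M)/2` has `χ(I) ≥ (1 - M)/2`, since otherwise every
outside coordinate could be added to it. -/
lemma one_sub_iSup_div_two_le_splitBalance (hχ : ∀ i, 0 ≤ χ i) (hχs : ∑ i, χ i = 1) :
    (1 - ⨆ i, χ i) / 2 ≤ splitBalance χ := by
  classical
  set M := ⨆ i, χ i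
  have hM : ∀ i, χ i ≤ M := le_ciSup (Set.finite_range χ).bddAbove
  obtain ⟨i₀, -⟩ := Finset.nonempty_of_sum_ne_zero (hχs ▸ one_ne_zero : ∑ i, χ i ≠ 0)
  have hM0 : 0 ≤ M := (hχ i₀).trans (hM i₀)
  set F := Finset.univ.powerset.filter fun I : Finset ι => ∑ i ∈ I, χ i ≤ (1 + M) / 2
  have hmemF : ∀ I : Finset ι, I ∈ F ↔ ∑ i ∈ I, χ i ≤ (1 + M) / 2 := by simp [F]
  obtain ⟨I, hIF, hImax⟩ := F.exists_max_image (fun I => ∑ i ∈ I, χ i)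
    ⟨∅, (hmemF ∅).2 (by simp; linarith)⟩
  have hI : (1 - M) / 2 ≤ ∑ i ∈ I, χ i := by
    by_contra! h
    have hout : ∀ j ∈ Iᶜ, χ j ≤ 0 := fun j hj => by
      have hj := Finset.mem_compl.1 hj
      have := hImax (insert j I) ((hmemF _).2 (by rw [Finset.sum_insert hj]; linarith [hM j]))
      rw [Finset.sum_insert hj] at this
      linarith
    linarith [Finset.sum_nonpos hout, Finset.sum_add_sum_compl I χ]
  exact (le_min hI (by linarith [(hmemF I).1 hIF])).trans (le_splitBalance χ I)

end SplitBalance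

lemma artanhRatio_div_four_eq {β : ℝ} (hβ0 : 0 < β) (hβ : β ≤ 1 / 2) :
    artanhRatio (1 - 2 * β) / 4 =
      if β = 1 / 2 then 1 / 2 else 1 / (4 * (1 - 2 * β)) * log ((1 - β) / β) := by
  split_ifs with h
  · rw [h, show 1 - 2 * (1 / 2 : ℝ) = 0 by norm_num, artanhRatio_zero]
    norm_num
  have ht : 1 - 2 * β ≠ 0 := by intro h'; apply h; linarith
  have hmul := artanhRatio_mul (t := 1 - 2 * β) (abs_lt.2 ⟨by linarith, by linarith⟩)
  rw [show 1 + (1 - 2 * β) = 2 * (1 - β) by ring, show 1 - (1 - 2 * β) = 2 * β by ring,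
    log_mul two_ne_zero (by linarith), log_mul two_ne_zero hβ0.ne', add_sub_add_left_eq_sub,
    ← log_div (by linarith) hβ0.ne'] at hmul
  rw [← hmul]
  field_simp

lemma genEntropy_eq_sub_klSum {m : ℕ} (y χ : Fin m → ℝ) (hn : ∑ j, y j ≠ 0) :
    genEntropy y = -∑ j, y j * log (χ j) - (∑ j, y j) * klSum (fun j => y j / ∑ i, y i) χ := by
  set n := ∑ j, y j
  have key : ∀ j, n * (y j / n * (log (y j / n) - log (χ j))) =
      y j * log (y j) - y j * log n - y j * log (χ j) := by
    intro j
    rcases eq_or_ne (y j) 0 with h | h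
    · simp [h]
    rw [log_div h hn]
    field_simp
  rw [genEntropy, klSum, Finset.mul_sum, Finset.sum_congr rfl fun j _ => key j]
  simp only [Finset.sum_sub_distrib, ← Finset.sum_mul]
  ring

section TotalVariation

variable {ι : Type*} [Fintype ι] {y x : ι → ℝ}

lemma sum_abs_sub_le_mul_add (hx : ∀ j, 0 ≤ x j) (hn : 0 < ∑ j, y j) (hs : 0 < ∑ j, x j) :
    ∑ j, |y j - x j| ≤
      (∑ j, y j) * ∑ j, |y j / ∑ i, y i - x j / ∑ i, x i| + |∑ j, y j - ∑ j, x j| := by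
  set n := ∑ j, y j
  set s := ∑ j, x j
  have hterm : ∀ j, |y j - x j| ≤ n * |y j / n - x j / s| + |n - s| * (x j / s) := fun j => by
    calc |y j - x j| = |n * (y j / n - x j / s) + (n - s) * (x j / s)| := by
          congr 1; field_simp; ring
      _ ≤ _ := by
          refine (abs_add_le _ _).trans_eq ?_
          rw [abs_mul, abs_mul, abs_of_pos hn, abs_of_nonneg (div_nonneg (hx j) hs.le)]
  refine (Finset.sum_le_sum fun j _ => hterm j).trans_eq ?_
  rw [Finset.sum_add_distrib, ← Finset.mul_sum, ← Finset.mul_sum, ← Finset.sum_div,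
    div_self hs.ne', mul_one]

lemma sum_abs_sub_le_abs_sub_add_min_mul (hy : ∀ j, 0 ≤ y j) (hx : ∀ j, 0 ≤ x j)
    (hn : 0 < ∑ j, y j) (hs : 0 < ∑ j, x j) :
    ∑ j, |y j - x j| ≤ |∑ j, y j - ∑ j, x j| +
      min (∑ j, y j) (∑ j, x j) * ∑ j, |y j / ∑ i, y i - x j / ∑ i, x i| := by
  have h1 := sum_abs_sub_le_mul_add hx hn hs
  have h2 := sum_abs_sub_le_mul_add hy hs hn
  simp only [abs_sub_comm (x _), abs_sub_comm (x _ / _), abs_sub_comm (∑ j, x j)] at h2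
  rcases le_total (∑ j, y j) (∑ j, x j) with h | h
  · rw [min_eq_left h]; linarith
  · rw [min_eq_right h]; linarith

end TotalVariation

lemma mul_le_mul_add_abs_mul {l y b e : ℝ} (h₁ : b - e ≤ y) (h₂ : y ≤ b + e) :
    l * y ≤ l * b + |l| * e := by
  rcases le_total 0 l with hl | hl
  · rw [abs_of_nonneg hl]; nlinarith
  · rw [abs_of_nonpos hl]; nlinarith

section WeakDuality

variable {ι κ κ' : Type*} [Fintype ι]

lemma sum_mul_sum_mul_eq (A : Matrix κ ι ℝ) (s : Finset κ) (w : κ → ℝ) (v : ι → ℝ) :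
    ∑ j, v j * ∑ i ∈ s, w i * A i j = ∑ i ∈ s, w i * A.mulVec v i := by
  simp only [Matrix.mulVec, dotProduct, Finset.mul_sum]
  exact Finset.sum_comm.trans
    (Finset.sum_congr rfl fun i _ => Finset.sum_congr rfl fun j _ => by ring)

lemma sum_mul_lagrange_le [Fintype κ] [Fintype κ'] (AE : Matrix κ ι ℝ) (bE : κ → ℝ)
    (AI : Matrix κ' ι ℝ) (bI : κ' → ℝ) (B : Finset κ') (lamE : κ → ℝ) (lamBI : κ' → ℝ)
    (hlam : ∀ i ∈ B, 0 ≤ lamBI i) {x v : ι → ℝ} (hE : AE.mulVec x = bE)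
    (hbind : ∀ i ∈ B, AI.mulVec x i = bI i) {δ : ℝ}
    (hvE : ∀ i, bE i - δ * |bE i| ≤ AE.mulVec v i ∧ AE.mulVec v i ≤ bE i + δ * |bE i|)
    (hvI : ∀ i, AI.mulVec v i ≤ bI i + δ * |bI i|) :
    ∑ j, v j * (∑ i, lamE i * AE i j + ∑ i ∈ B, lamBI i * AI i j) ≤
      ∑ j, x j * (∑ i, lamE i * AE i j + ∑ i ∈ B, lamBI i * AI i j) +
        ((∑ i, |lamE i| * |bE i|) + ∑ i ∈ B, lamBI i * |bI i|) * δ := by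
  simp only [mul_add, Finset.sum_add_distrib, sum_mul_sum_mul_eq, hE]
  rw [Finset.sum_congr rfl fun i hi => congrArg (lamBI i * ·) (hbind i hi)]
  have hEle : ∑ i, lamE i * AE.mulVec v i ≤ ∑ i, (lamE i * bE i + |lamE i| * (δ * |bE i|)) :=
    Finset.sum_le_sum fun i _ => mul_le_mul_add_abs_mul (hvE i).1 (hvE i).2
  have hIle : ∑ i ∈ B, lamBI i * AI.mulVec v i ≤
      ∑ i ∈ B, (lamBI i * bI i + lamBI i * (δ * |bI i|)) := Finset.sum_le_sum fun i hi => by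
    rw [← mul_add]; exact mul_le_mul_of_nonneg_left (hvI i) (hlam i hi)
  simp only [Finset.sum_add_distrib] at hEle hIle
  have e1 : ∑ i, |lamE i| * (δ * |bE i|) = (∑ i, |lamE i| * |bE i|) * δ := by
    rw [Finset.sum_mul]; exact Finset.sum_congr rfl fun i _ => by ring
  have e2 : ∑ i ∈ B, lamBI i * (δ * |bI i|) = (∑ i ∈ B, lamBI i * |bI i|) * δ := by
    rw [Finset.sum_mul]; exact Finset.sum_congr rfl fun i _ => by ring
  linarith

end WeakDuality

lemma genEntropy_le_of_far {m : ℕ} [NeZero m] {x y c : Fin m → ℝ} {s E β ϑ : ℝ}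
    (hx : ∀ j, 0 < x j) (hs : s = ∑ j, x j) (hc : ∀ j, x j = s * exp (-c j)) (hy : ∀ j, 0 ≤ y j)
    (hdual : ∑ j, y j * c j ≤ ∑ j, x j * c j + E) (hβ : β ≤ 1 / 2)
    (hsplit : ∀ I : Finset (Fin m), min (∑ i ∈ I, x i / s) (1 - ∑ i ∈ I, x i / s) ≤ β)
    (hϑ : 0 ≤ ϑ) (hfar : |∑ j, y j - s| + min (∑ j, y j) s * ϑ < ∑ j, |y j - x j|) :
    genEntropy y ≤ genEntropy x + E - artanhRatio (1 - 2 * β) / 4 * ϑ ^ 2 * ∑ j, y j := by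
  set n := ∑ j, y j
  set χ : Fin m → ℝ := fun j => x j / s with hχ_def
  have hs0 : 0 < s := hs ▸ Finset.sum_pos (fun j _ => hx j) Finset.univ_nonempty
  have hχs : ∑ j, χ j = 1 := by rw [← Finset.sum_div, ← hs, div_self hs0.ne']
  have hlog : ∀ j, log (χ j) = -c j := fun j => by
    rw [hχ_def]; dsimp only; rw [hc j, mul_div_cancel_left₀ _ hs0.ne', log_exp]
  have hn0 : 0 < n := by
    refine (Finset.sum_nonneg fun j _ => hy j).lt_of_ne fun hn => ?_
    have hy0 : ∀ j, y j = 0 := fun j =>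
      (Finset.sum_eq_zero_iff_of_nonneg fun j _ => hy j).1 hn.symm j (Finset.mem_univ j)
    simp [n, hy0, abs_of_pos (hx _), ← hs, abs_of_pos hs0, min_eq_left hs0.le] at hfar
  have hTV := sum_abs_sub_le_abs_sub_add_min_mul hy (fun j => (hx j).le) hn0 (hs ▸ hs0)
  rw [← hs] at hTV
  have hϑT : ϑ < ∑ j, |y j / n - χ j| :=
    lt_of_mul_lt_mul_left (by linarith) (le_min hn0.le hs0.le)
  have hKL := artanhRatio_mul_sq_le_klSum (p := fun j => y j / n)
    (fun j => div_nonneg (hy j) hn0.le) (fun j => div_pos (hx j) hs0)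
    (by rw [← Finset.sum_div, div_self hn0.ne']) hχs hβ hsplit
  have hgain : artanhRatio (1 - 2 * β) / 4 * ϑ ^ 2 ≤ klSum (fun j => y j / n) χ :=
    le_trans (by have := artanhRatio_nonneg (1 - 2 * β); gcongr) hKL
  have hKL0 : klSum (fun j => x j / ∑ i, x i) χ = 0 := by simp [klSum, hχ_def, ← hs]
  rw [genEntropy_eq_sub_klSum y χ hn0.ne', genEntropy_eq_sub_klSum x χ (hs ▸ hs0.ne'), hKL0]
  simp only [hlog, mul_neg, Finset.sum_neg_distrib, neg_neg]
  nlinarith [mul_le_mul_of_nonneg_left hgain hn0.le]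

theorem stmt9_general {m p q : ℕ} (hm : 2 ≤ m)
    (AE : Matrix (Fin p) (Fin m) ℝ) (bE : Fin p → ℝ)
    (AI : Matrix (Fin q) (Fin m) ℝ) (bI : Fin q → ℝ)
    (xs : Fin m → ℝ) (hxs : ∀ j, 0 < xs j)
    (ss : ℝ) (hss : ss = ∑ j, xs j)
    (hE : AE.mulVec xs = bE)
    (Bind : Finset (Fin q)) (hbind : ∀ i ∈ Bind, AI.mulVec xs i = bI i)
    (lamE : Fin p → ℝ) (lamBI : Fin q → ℝ) (hlam : ∀ i ∈ Bind, 0 ≤ lamBI i)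
    (hstat : ∀ j, xs j =
      ss * Real.exp (-(∑ i, lamE i * AE i j + ∑ i ∈ Bind, lamBI i * AI i j)))
    (Gs Λs : ℝ) (hGs : Gs = genEntropy xs)
    (hΛ : Λs = (∑ i, |lamE i| * |bE i|) + ∑ i ∈ Bind, lamBI i * |bI i|)
    (βs : ℝ)
    (hβ : βs = (Finset.univ : Finset (Fin m)).powerset.sup'
        (Finset.powerset_nonempty _)
        (fun I => min (∑ i ∈ I, xs i / ss) (1 - ∑ i ∈ I, xs i / ss)))
    (γs : ℝ)
    (hγ : γs = if βs = 1 / 2 then 1 / 2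
        else 1 / (4 * (1 - 2 * βs)) * Real.log ((1 - βs) / βs)) :
    1 / 2 ≤ γs ∧
    (1 - ⨆ i, xs i / ss) / 2 ≤ βs ∧ βs ≤ 1 / 2 ∧
    ∀ δ : ℝ, 0 ≤ δ → ∀ ϑ : ℝ, 0 < ϑ → ∀ ν : Fin m → ℕ,
      (∀ i, bE i - δ * |bE i| ≤ AE.mulVec (fun j => (ν j : ℝ)) i ∧
            AE.mulVec (fun j => (ν j : ℝ)) i ≤ bE i + δ * |bE i|) →
      (∀ i, AI.mulVec (fun j => (ν j : ℝ)) i ≤ bI i + δ * |bI i|) →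
      ∀ n : ℕ, n = ∑ i, ν i →
      (∑ i, |(ν i : ℝ) - xs i|) > |(n : ℝ) - ss| + min (n : ℝ) ss * ϑ →
      genEntropy (fun i => (ν i : ℝ)) ≤ Gs + Λs * δ - γs * ϑ ^ 2 * n := by
  have : NeZero m := ⟨by omega⟩
  have hs : 0 < ss := hss ▸ Finset.sum_pos (fun j _ => hxs j) Finset.univ_nonempty
  have hχ : ∀ i, 0 ≤ xs i / ss := fun i => (div_pos (hxs i) hs).le
  have hχs : ∑ i, xs i / ss = 1 := by rw [← Finset.sum_div, ← hss, div_self hs.ne']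
  replace hβ : βs = splitBalance fun i => xs i / ss := hβ
  have hβ0 : 0 < βs := hβ ▸ splitBalance_pos hχ hχs (i := 0) (j := ⟨1, by omega⟩)
    (Fin.ne_of_val_ne zero_ne_one) (div_pos (hxs _) hs) (div_pos (hxs _) hs)
  have hβ2 : βs ≤ 1 / 2 := hβ ▸ splitBalance_le_half _
  rw [← artanhRatio_div_four_eq hβ0 hβ2] at hγ
  have hγ2 := two_le_artanhRatio (t := 1 - 2 * βs) (abs_lt.2 ⟨by linarith, by linarith⟩)
  refine ⟨by linarith, hβ ▸ one_sub_iSup_div_two_le_splitBalance hχ hχs, hβ2, ?_⟩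
  intro δ _ ϑ hϑ ν hνE hνI n hn hfar
  have hνs : ∑ j, (ν j : ℝ) = n := by rw [hn, Nat.cast_sum]
  rw [← hνs] at hfar ⊢
  have hdual := sum_mul_lagrange_le AE bE AI bI Bind lamE lamBI hlam hE hbind hνE hνI
  rw [← hΛ] at hdual
  rw [hγ, hGs]
  exact genEntropy_le_of_far hxs hss hstat (fun j => (ν j).cast_nonneg) hdual hβ2
    (hβ ▸ le_splitBalance _) hϑ.le hfar

/-- Under the Lagrange-form hypotheses, with
`β* = max_{I⊆{1,…,m}} min(∑_{i∈I} χ*ᵢ, 1 − ∑_{i∈I} χ*ᵢ)` and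
`γ* = ln((1−β*)/β*) / (4(1−2β*))` (and `γ* = 1/2` when `β* = 1/2`):
`γ* ≥ 1/2`, `(1 − maxᵢ χ*ᵢ)/2 ≤ β* ≤ 1/2`, and every count vector `ν`
satisfying the `δ`-relaxed constraints with `‖ν − x*‖₁ > |n − s*| + min(n,s*)ϑ`
has `G(ν) ≤ G* + Λ*δ − γ*ϑ²n`. -/
theorem stmt9 {m p q : ℕ} (hm : 2 ≤ m)
    (AE : Matrix (Fin p) (Fin m) ℝ) (bE : Fin p → ℝ) (hbE : ∀ i, bE i ≠ 0)
    (AI : Matrix (Fin q) (Fin m) ℝ) (bI : Fin q → ℝ) (hbI : ∀ i, bI i ≠ 0)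
    (xs : Fin m → ℝ) (hxs : ∀ j, 0 < xs j)
    (ss : ℝ) (hss : ss = ∑ j, xs j)
    (hE : AE.mulVec xs = bE)
    (Bind : Finset (Fin q)) (hbind : ∀ i ∈ Bind, AI.mulVec xs i = bI i)
    (lamE : Fin p → ℝ) (lamBI : Fin q → ℝ) (hlam : ∀ i ∈ Bind, 0 ≤ lamBI i)
    (hstat : ∀ j, xs j =
      ss * Real.exp (-(∑ i, lamE i * AE i j + ∑ i ∈ Bind, lamBI i * AI i j)))
    (Gs Λs : ℝ) (hGs : Gs = genEntropy xs)
    (hΛ : Λs = (∑ i, |lamE i| * |bE i|) + ∑ i ∈ Bind, lamBI i * |bI i|)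
    (βs : ℝ)
    (hβ : βs = (Finset.univ : Finset (Fin m)).powerset.sup'
        (Finset.powerset_nonempty _)
        (fun I => min (∑ i ∈ I, xs i / ss) (1 - ∑ i ∈ I, xs i / ss)))
    (γs : ℝ)
    (hγ : γs = if βs = 1 / 2 then 1 / 2
        else 1 / (4 * (1 - 2 * βs)) * Real.log ((1 - βs) / βs)) :
    1 / 2 ≤ γs ∧
    (1 - ⨆ i, xs i / ss) / 2 ≤ βs ∧ βs ≤ 1 / 2 ∧
    ∀ δ : ℝ, 0 ≤ δ → ∀ ϑ : ℝ, 0 < ϑ → ∀ ν : Fin m → ℕ,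
      (∀ i, bE i - δ * |bE i| ≤ AE.mulVec (fun j => (ν j : ℝ)) i ∧
            AE.mulVec (fun j => (ν j : ℝ)) i ≤ bE i + δ * |bE i|) →
      (∀ i, AI.mulVec (fun j => (ν j : ℝ)) i ≤ bI i + δ * |bI i|) →
      ∀ n : ℕ, n = ∑ i, ν i →
      (∑ i, |(ν i : ℝ) - xs i|) > |(n : ℝ) - ss| + min (n : ℝ) ss * ϑ →
      genEntropy (fun i => (ν i : ℝ)) ≤ Gs + Λs * δ - γs * ϑ ^ 2 * n :=
  stmt9_general hm AE bE AI bI xs hxs ss hss hE Bind hbind lamE lamBI hlam hstat Gs Λs hGs hΛ βs hβ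
    γs hγ
end

section
/- Let x ∈ ℝ_{≥0}^m. (1) If A^E is a nonzero real p×m matrix, b^E ∈ ℝ^p, and A^E x = b^E, then Σ_{i=1}^m x_i ≥ ‖b^E‖₁ / ⦀(A^E)^T⦀_∞, where ⦀·⦀_∞ is the maximum over rows of the ℓ₁ norm of the row (so ⦀(A^E)^T⦀_∞ is the maximum column ℓ₁ norm of A^E). (2) If in addition A^I x ≤ b^I where all entries of A^E, A^I, b^E, b^I are nonnegative and every index i ∈ {1,…,m} has a nonzero entry in some row of A^E or A^I, then Σ_{i=1}^m x_i ≤ Σ_k b^E_k/α^E_k + Σ_k b^I_k/α^I_k, where α^E_k (resp. α^I_k) is the smallest nonzero element of row k of A^E (resp. A^I) if that element is < 1, and is 1 otherwise. -/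
open scoped BigOperators

/-- Auxiliary: fiber bound for one row. -/
lemma stmt11_aux {m : ℕ} (A : Fin m → ℝ) (b : ℝ) (x : Fin m → ℝ)
    (hx : ∀ j, 0 ≤ x j) (hA : ∀ j, 0 ≤ A j) (hb : ∑ j, A j * x j ≤ b)
    (S : Finset (Fin m)) (hS : ∀ j ∈ S, A j ≠ 0) :
    ∑ j ∈ S, x j ≤ b /
      (if h : (Finset.univ.filter fun j => A j ≠ 0).Nonempty
       then min 1 ((Finset.univ.filter fun j => A j ≠ 0).inf' h A)
       else 1) := by
  set α := (if h : (Finset.univ.filter fun j => A j ≠ 0).Nonempty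
       then min 1 ((Finset.univ.filter fun j => A j ≠ 0).inf' h A)
       else 1) with hα
  have hαpos : 0 < α := by
    rw [hα]
    split_ifs with h
    · obtain ⟨j0, hj0, he⟩ := Finset.exists_mem_eq_inf' h A
      rw [he]
      have : A j0 ≠ 0 := (Finset.mem_filter.1 hj0).2
      exact lt_min one_pos (lt_of_le_of_ne (hA j0) (Ne.symm this))
    · exact one_pos
  have hαle : ∀ j, A j ≠ 0 → α ≤ A j := by
    intro j hj
    have hj' : j ∈ Finset.univ.filter fun j => A j ≠ 0 := by
      simp [hj]
    have hne : (Finset.univ.filter fun j => A j ≠ 0).Nonempty := ⟨j, hj'⟩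
    rw [hα, dif_pos hne]
    exact le_trans (min_le_right _ _) (Finset.inf'_le _ hj')
  rw [le_div_iff₀ hαpos]
  calc (∑ j ∈ S, x j) * α = ∑ j ∈ S, x j * α := by rw [Finset.sum_mul]
    _ ≤ ∑ j ∈ S, A j * x j := by
        apply Finset.sum_le_sum
        intro j hj
        rw [mul_comm]
        exact mul_le_mul_of_nonneg_right (hαle j (hS j hj)) (hx j)
    _ ≤ ∑ j, A j * x j := by
        apply Finset.sum_le_sum_of_subset_of_nonneg (Finset.subset_univ S)
        intro j _ _
        exact mul_nonneg (hA j) (hx j)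
    _ ≤ b := hb

/-- Bounds on the sum `∑ᵢ xᵢ` of a nonnegative solution of linear constraints:
(1) if `Aᴱ ≠ 0` and `Aᴱx = bᴱ` then `∑ᵢ xᵢ ≥ ‖bᴱ‖₁ / ⦀(Aᴱ)ᵀ⦀_∞` (max column
ℓ₁ norm); (2) if moreover `Aᴵx ≤ bᴵ`, all data are nonnegative and each index
`i` has a nonzero entry in some row, then `∑ᵢ xᵢ ≤ ∑ₖ bᴱₖ/αᴱₖ + ∑ₖ bᴵₖ/αᴵₖ`,
where `αₖ` is the smallest nonzero element of row `k` if that element is `< 1`,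
and `1` otherwise. -/
theorem stmt11 {m p q : ℕ}
    (AE : Matrix (Fin p) (Fin m) ℝ) (bE : Fin p → ℝ)
    (AI : Matrix (Fin q) (Fin m) ℝ) (bI : Fin q → ℝ)
    (x : Fin m → ℝ) (hx : ∀ i, 0 ≤ x i) (hE : AE.mulVec x = bE) :
    (AE ≠ 0 → (∑ i, |bE i|) / (⨆ j, ∑ i, |AE i j|) ≤ ∑ i, x i) ∧
    ((∀ k, AI.mulVec x k ≤ bI k) →
     (∀ k j, 0 ≤ AE k j) → (∀ k j, 0 ≤ AI k j) →
     (∀ k, 0 ≤ bE k) → (∀ k, 0 ≤ bI k) →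
     (∀ j : Fin m, (∃ k, AE k j ≠ 0) ∨ (∃ k, AI k j ≠ 0)) →
     ∑ i, x i ≤
       (∑ k, bE k /
         (if h : (Finset.univ.filter fun j => AE k j ≠ 0).Nonempty
          then min 1 ((Finset.univ.filter fun j => AE k j ≠ 0).inf' h (AE k))
          else 1)) +
       (∑ k, bI k /
         (if h : (Finset.univ.filter fun j => AI k j ≠ 0).Nonempty
          then min 1 ((Finset.univ.filter fun j => AI k j ≠ 0).inf' h (AI k))
          else 1))) := by
  constructor
  · intro hA
    have hm : 0 < m := by
      rcases Nat.eq_zero_or_pos m with h | h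
      · exfalso; apply hA; subst h; ext i j; exact j.elim0
      · exact h
    haveI : Nonempty (Fin m) := ⟨⟨0, hm⟩⟩
    set C := ⨆ j, ∑ i, |AE i j| with hC
    have hbdd : BddAbove (Set.range fun j => ∑ i, |AE i j|) :=
      (Set.finite_range _).bddAbove
    have hle : ∀ j, ∑ i, |AE i j| ≤ C := fun j => le_ciSup hbdd j
    have hCpos : 0 < C := by
      obtain ⟨i, j, hij⟩ : ∃ i j, AE i j ≠ 0 := by
        by_contra hc; push_neg at hc; apply hA; ext i j; exact hc i j
      calc (0:ℝ) < |AE i j| := abs_pos.2 hij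
        _ ≤ ∑ i, |AE i j| :=
            Finset.single_le_sum (f := fun i => |AE i j|) (fun _ _ => abs_nonneg _) (Finset.mem_univ i)
        _ ≤ C := hle j
    rw [div_le_iff₀ hCpos]
    calc ∑ i, |bE i| ≤ ∑ i, ∑ j, |AE i j| * x j := by
          apply Finset.sum_le_sum; intro i _
          rw [← hE]
          calc |AE.mulVec x i| ≤ ∑ j, |AE i j * x j| := by
                rw [Matrix.mulVec, dotProduct]
                exact Finset.abs_sum_le_sum_abs _ _
            _ = ∑ j, |AE i j| * x j := by
                apply Finset.sum_congr rfl; intro j _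
                rw [abs_mul, abs_of_nonneg (hx j)]
      _ = ∑ j, (∑ i, |AE i j|) * x j := by
          rw [Finset.sum_comm]
          simp [Finset.sum_mul]
      _ ≤ ∑ j, C * x j :=
          Finset.sum_le_sum fun j _ => mul_le_mul_of_nonneg_right (hle j) (hx j)
      _ = (∑ j, x j) * C := by rw [← Finset.mul_sum, mul_comm]
  · intro hI hAE hAI hbE hbI hall
    have hf : ∀ j, ∃ s : Fin p ⊕ Fin q,
        Sum.elim (fun k => AE k j ≠ 0) (fun k => AI k j ≠ 0) s := by
      intro j
      rcases hall j with ⟨k, hk⟩ | ⟨k, hk⟩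
      exacts [⟨.inl k, hk⟩, ⟨.inr k, hk⟩]
    choose f hf using hf
    have hEk : ∀ k, ∑ j, AE k j * x j ≤ bE k := by
      intro k
      rw [← hE]
      simp [Matrix.mulVec, dotProduct]
    have hIk : ∀ k, ∑ j, AI k j * x j ≤ bI k := by
      intro k
      have := hI k
      rwa [Matrix.mulVec, dotProduct] at this
    calc ∑ j, x j
        = ∑ s : Fin p ⊕ Fin q, ∑ j ∈ Finset.univ.filter fun j => f j = s, x j := by
          rw [Finset.sum_fiberwise_of_maps_to (fun j _ => Finset.mem_univ (f j))]
      _ ≤ ∑ s : Fin p ⊕ Fin q, Sum.elim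
            (fun k => bE k /
              (if h : (Finset.univ.filter fun j => AE k j ≠ 0).Nonempty
               then min 1 ((Finset.univ.filter fun j => AE k j ≠ 0).inf' h (AE k))
               else 1))
            (fun k => bI k /
              (if h : (Finset.univ.filter fun j => AI k j ≠ 0).Nonempty
               then min 1 ((Finset.univ.filter fun j => AI k j ≠ 0).inf' h (AI k))
               else 1)) s := by
          apply Finset.sum_le_sum
          rintro (k | k) _
          · exact stmt11_aux (AE k) (bE k) x hx (hAE k) (hEk k) _
              (fun j hj => by
                have h1 := hf j
                rw [(Finset.mem_filter.1 hj).2] at h1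
                exact h1)
          · exact stmt11_aux (AI k) (bI k) x hx (hAI k) (hIk k) _
              (fun j hj => by
                have h1 := hf j
                rw [(Finset.mem_filter.1 hj).2] at h1
                exact h1)
      _ = _ := by rw [Fintype.sum_sum_type]; simp only [Sum.elim_inl, Sum.elim_inr]
end

section
/- Let ‖·‖ be any norm on ℝ^m, let x, y ∈ ℝ^m be nonzero, and let ϑ > 0. If ‖x − y‖ > | ‖x‖ − ‖y‖ | + ϑ, then ‖ x/‖x‖ − y/‖y‖ ‖ > ϑ / min(‖x‖, ‖y‖). -/
/-- For any norm `N` on `ℝ^m` and nonzero `x, y`: if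
`N(x − y) > |N(x) − N(y)| + ϑ` then `N(x/N(x) − y/N(y)) > ϑ / min(N(x), N(y))`. -/
theorem stmt15 {m : ℕ} (N : (Fin m → ℝ) → ℝ)
    (hN0 : ∀ x, N x = 0 → x = 0)
    (hNsmul : ∀ (a : ℝ) (x : Fin m → ℝ), N (a • x) = |a| * N x)
    (hNadd : ∀ x y : Fin m → ℝ, N (x + y) ≤ N x + N y)
    (x y : Fin m → ℝ) (hx : x ≠ 0) (hy : y ≠ 0)
    (ϑ : ℝ) (hϑ : 0 < ϑ)
    (h : N (x - y) > |N x - N y| + ϑ) :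
    N ((N x)⁻¹ • x - (N y)⁻¹ • y) > ϑ / min (N x) (N y) := by
  have hneg : ∀ z : Fin m → ℝ, N (-z) = N z := by
    intro z
    have := hNsmul (-1) z
    simpa using this
  have hnn : ∀ z : Fin m → ℝ, 0 ≤ N z := by
    intro z
    have h1 := hNadd z (-z)
    have h2 : N (z + -z) = 0 := by
      rw [add_neg_cancel]
      have := hNsmul 0 0
      simpa using this
    rw [h2, hneg] at h1
    linarith
  have hxpos : 0 < N x := lt_of_le_of_ne (hnn x) fun h0 => hx (hN0 x h0.symm)
  have hypos : 0 < N y := lt_of_le_of_ne (hnn y) fun h0 => hy (hN0 y h0.symm)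
  have key : ∀ u v : Fin m → ℝ, 0 < N u → 0 < N v →
      N (u - v) > |N u - N v| + ϑ →
      N ((N u)⁻¹ • u - (N v)⁻¹ • v) > ϑ / N u := by
    intro u v hu hv huv
    set a := N u with ha
    set b := N v with hb
    set w := a⁻¹ • u - b⁻¹ • v with hw
    have hdecomp : u - v = a • w + (a / b - 1) • v := by
      funext i
      simp only [hw, Pi.add_apply, Pi.sub_apply, Pi.smul_apply, smul_eq_mul]
      field_simp
      ring
    have h1 : N (u - v) ≤ a * N w + |a - b| := by
      calc N (u - v) ≤ N (a • w) + N ((a / b - 1) • v) := by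
            rw [hdecomp]; exact hNadd _ _
        _ = |a| * N w + |a / b - 1| * b := by rw [hNsmul, hNsmul]
        _ = a * N w + |a - b| := by
            rw [abs_of_pos hu]
            congr 1
            rw [show a / b - 1 = (a - b) / b by field_simp, abs_div,
              abs_of_pos hv]
            field_simp
    have h2 : ϑ < a * N w := by
      have : |a - b| ≤ |N u - N v| := le_of_eq rfl
      nlinarith [abs_nonneg (N u - N v)]
    rw [gt_iff_lt, div_lt_iff₀ hu]
    linarith [mul_comm a (N w)]
  rcases le_total (N x) (N y) with hle | hle
  · rw [min_eq_left hle]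
    exact key x y hxpos hypos h
  · rw [min_eq_right hle]
    have hsym : N ((N x)⁻¹ • x - (N y)⁻¹ • y) = N ((N y)⁻¹ • y - (N x)⁻¹ • x) := by
      rw [← hneg]; congr 1; abel
    rw [hsym]
    apply key y x hypos hxpos
    have : N (y - x) = N (x - y) := by rw [← hneg]; congr 1; abel
    rw [this, abs_sub_comm]
    exact h
end

section
/- Let ν ∈ ℕ^m be a count vector with n = Σ_i ν_i ≥ 1, and let ν_{i₁}, …, ν_{i_k} (k ≥ 1) be its nonzero entries. Define S(ν) = √n / ( (2π)^{(k−1)/2} · √(ν_{i₁}·ν_{i₂}⋯ν_{i_k}) ). Then e^{−k/12} · S(ν) · e^{G(ν)} ≤ n!/∏_i ν_i! ≤ S(ν) · e^{G(ν)}; that is, the number of realizations of ν (its multinomial coefficient) is bounded above and below in terms of its generalized entropy. -/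
/-!
Write `log (multinomial) = log n! - ∑ log νᵢ!` over the support of `ν` and split each
`log N!` into Stirling's term `log (√(2πN) (N/e)^N)` plus a remainder `r(N)`. The Stirling
terms combine to exactly `log S(ν) + G(ν)`, because `∑ νᵢ = n`. For `N ≥ 1` the remainder
satisfies `0 ≤ r(N) ≤ 1/(12N)` and is decreasing, so `r(n) ≤ r(νⱼ) ≤ ∑ r(νᵢ)` for any `j` in
the support, which is the upper bound, while `r(n) - ∑ r(νᵢ) ≥ -k/12` is the lower bound.
-/

open scoped BigOperators

open Real Filter Topology Finset
open scoped Nat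

noncomputable section

/-- `log (√(2πx) (x/e)^x)`. -/
def logStirling (x : ℝ) : ℝ := x * log x - x + log x / 2 + log (2 * π) / 2

def stirlingError (n : ℕ) : ℝ := log (n ! : ℝ) - logStirling n

theorem stirlingError_eq_log_stirlingSeq {n : ℕ} (hn : n ≠ 0) :
    stirlingError n = log (Stirling.stirlingSeq n) - log √π := by
  have hn0 : (0 : ℝ) < n := by positivity
  rw [stirlingError, logStirling, Stirling.log_stirlingSeq_formula, log_mul two_ne_zero hn0.ne',
    log_mul two_ne_zero pi_ne_zero, log_div hn0.ne' (exp_ne_zero 1), log_exp, log_sqrt pi_pos.le]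
  ring

theorem stirlingError_nonneg {n : ℕ} (hn : n ≠ 0) : 0 ≤ stirlingError n := by
  rw [stirlingError_eq_log_stirlingSeq hn, sub_nonneg]
  exact log_le_log (by positivity) (Stirling.sqrt_pi_le_stirlingSeq hn)

theorem stirlingError_antitone {a b : ℕ} (ha : a ≠ 0) (hab : a ≤ b) :
    stirlingError b ≤ stirlingError a := by
  obtain ⟨a, rfl⟩ := Nat.exists_eq_succ_of_ne_zero ha
  obtain ⟨b, rfl⟩ := Nat.exists_eq_succ_of_ne_zero (by omega : b ≠ 0)
  rw [stirlingError_eq_log_stirlingSeq (Nat.succ_ne_zero a),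
    stirlingError_eq_log_stirlingSeq (Nat.succ_ne_zero b), sub_le_sub_iff_right]
  exact log_le_log (Stirling.stirlingSeq'_pos b)
    (Stirling.stirlingSeq'_antitone (Nat.succ_le_succ_iff.mp hab))

/-- Robbins' bound, obtained by telescoping `Stirling.log_stirlingSeq_sdiff_le`. -/
theorem stirlingError_le {n : ℕ} (hn : n ≠ 0) : stirlingError n ≤ 1 / (12 * n) := by
  set v : ℕ → ℝ := fun j => log (Stirling.stirlingSeq (j + 1)) - 1 / (12 * ((j : ℝ) + 1))
  have hv_mono : Monotone v := monotone_nat_of_le_succ fun j => by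
    have h := Stirling.log_stirlingSeq_sdiff_le (j + 1)
    have hsplit : (1 : ℝ) / (12 * ((j + 1 : ℕ) : ℝ) * (((j + 1 : ℕ) : ℝ) + 1))
        = 1 / (12 * ((j : ℝ) + 1)) - 1 / (12 * (((j + 1 : ℕ) : ℝ) + 1)) := by
      push_cast; field_simp; ring
    simp only [v]
    linarith
  have hv_lim : Tendsto v atTop (𝓝 (log √π - 0)) := by
    refine ((Stirling.tendsto_stirlingSeq_sqrt_pi.comp (tendsto_add_atTop_nat 1)).log
      (by positivity)).sub ?_
    simpa [mul_comm, ← div_div] using tendsto_one_div_add_atTop_nhds_zero_nat.div_const (12 : ℝ)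
  obtain ⟨k, rfl⟩ := Nat.exists_eq_succ_of_ne_zero hn
  have := hv_mono.ge_of_tendsto hv_lim k
  rw [stirlingError_eq_log_stirlingSeq hn]
  simp only [v, sub_zero] at this
  push_cast
  linarith

section Multinomial

variable {ι : Type*}

theorem log_multinomial (t : Finset ι) (ν : ι → ℕ) :
    log (Nat.multinomial t ν) = log ((∑ i ∈ t, ν i)! : ℝ) - ∑ i ∈ t, log ((ν i)! : ℝ) := by
  have hspec : (∏ i ∈ t, ((ν i)! : ℝ)) * Nat.multinomial t ν = (∑ i ∈ t, ν i)! := by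
    exact_mod_cast Nat.multinomial_spec t ν
  rw [← hspec, log_mul (by positivity)
    (Nat.cast_pos.mpr (Nat.multinomial_pos t ν)).ne', log_prod fun i _ => by positivity]
  ring

def logStirlingMultinomial (t : Finset ι) (ν : ι → ℕ) : ℝ :=
  logStirling (∑ i ∈ t, (ν i : ℝ)) - ∑ i ∈ t, logStirling (ν i)

theorem log_multinomial_eq (t : Finset ι) (ν : ι → ℕ) :
    log (Nat.multinomial t ν) = logStirlingMultinomial t ν
      + (stirlingError (∑ i ∈ t, ν i) - ∑ i ∈ t, stirlingError (ν i)) := by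
  simp only [log_multinomial, logStirlingMultinomial, stirlingError, sum_sub_distrib, Nat.cast_sum]
  ring

theorem log_multinomial_le {t : Finset ι} {ν : ι → ℕ} (ht : t.Nonempty) (hν : ∀ i ∈ t, ν i ≠ 0) :
    log (Nat.multinomial t ν) ≤ logStirlingMultinomial t ν := by
  obtain ⟨j, hj⟩ := ht
  have hle : stirlingError (∑ i ∈ t, ν i) ≤ ∑ i ∈ t, stirlingError (ν i) :=
    calc stirlingError (∑ i ∈ t, ν i) ≤ stirlingError (ν j) :=
          stirlingError_antitone (hν j hj) (single_le_sum (fun _ _ => Nat.zero_le _) hj)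
      _ ≤ ∑ i ∈ t, stirlingError (ν i) :=
          single_le_sum (fun i hi => stirlingError_nonneg (hν i hi)) hj
  rw [log_multinomial_eq]
  linarith

theorem logStirlingMultinomial_sub_le_log_multinomial {t : Finset ι} {ν : ι → ℕ}
    (ht : t.Nonempty) (hν : ∀ i ∈ t, ν i ≠ 0) :
    logStirlingMultinomial t ν - #t / 12 ≤ log (Nat.multinomial t ν) := by
  have hsum : ∑ i ∈ t, stirlingError (ν i) ≤ #t / 12 := by
    rw [div_eq_mul_one_div, ← nsmul_eq_mul, ← sum_const]
    refine sum_le_sum fun i hi => (stirlingError_le (hν i hi)).trans ?_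
    gcongr
    have : (1 : ℝ) ≤ ν i := Nat.one_le_cast.mpr (Nat.pos_of_ne_zero (hν i hi))
    linarith
  have hpos : 0 ≤ stirlingError (∑ i ∈ t, ν i) := by
    obtain ⟨j, hj⟩ := ht
    exact stirlingError_nonneg fun h => hν j hj (sum_eq_zero_iff.mp h j hj)
  rw [log_multinomial_eq]
  linarith

theorem logStirlingMultinomial_eq {t : Finset ι} {ν : ι → ℕ} (ht : t.Nonempty)
    (hν : ∀ i ∈ t, ν i ≠ 0) :
    logStirlingMultinomial t ν =
      log (√(∑ i ∈ t, (ν i : ℝ)) /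
          ((2 * π) ^ (((#t : ℝ) - 1) / 2) * √(∏ i ∈ t, (ν i : ℝ)))) +
        ((∑ i ∈ t, (ν i : ℝ)) * log (∑ i ∈ t, (ν i : ℝ)) - ∑ i ∈ t, (ν i : ℝ) * log (ν i)) := by
  have hpos : ∀ i ∈ t, (0 : ℝ) < ν i := fun i hi => Nat.cast_pos.mpr (Nat.pos_of_ne_zero (hν i hi))
  have hN : 0 < ∑ i ∈ t, (ν i : ℝ) := sum_pos hpos ht
  have hP : 0 < ∏ i ∈ t, (ν i : ℝ) := prod_pos hpos
  rw [log_div (by positivity) (by positivity), log_mul (by positivity) (by positivity),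
    log_rpow (by positivity), log_sqrt hN.le, log_sqrt hP.le, log_prod fun i hi => (hpos i hi).ne']
  simp only [logStirlingMultinomial, logStirling, sum_add_distrib, sum_sub_distrib, sum_div, sum_const, nsmul_eq_mul]
  ring

end Multinomial

end

theorem genEntropy_eq_of_support_subset {m : ℕ} {x : Fin m → ℝ} {t : Finset (Fin m)}
    (hx : ∀ i ∉ t, x i = 0) :
    genEntropy x = (∑ i ∈ t, x i) * log (∑ i ∈ t, x i) - ∑ i ∈ t, x i * log (x i) := by
  have hsub := subset_univ t
  rw [genEntropy, ← sum_subset hsub fun i _ hi => hx i hi,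
    ← sum_subset hsub fun i _ hi => by rw [hx i hi, zero_mul]]
  ring

/-- Stirling bounds on the number of realizations of a count vector: with
`k` the number of nonzero entries of `ν`, `n = ∑ νᵢ ≥ 1`, and
`S(ν) = √n / ((2π)^{(k−1)/2} √(ν_{i₁}⋯ν_{i_k}))`,
`e^{−k/12} S(ν) e^{G(ν)} ≤ n!/∏ νᵢ! ≤ S(ν) e^{G(ν)}`. -/
theorem stmt16 {m : ℕ} (ν : Fin m → ℕ) (n : ℕ) (hn : n = ∑ i, ν i)
    (hn1 : 1 ≤ n) :
    let supp : Finset (Fin m) := Finset.univ.filter fun i => ν i ≠ 0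
    let k : ℕ := supp.card
    let S : ℝ := Real.sqrt n /
      ((2 * Real.pi) ^ (((k : ℝ) - 1) / 2) * Real.sqrt (∏ i ∈ supp, (ν i : ℝ)))
    Real.exp (-(k : ℝ) / 12) * S * Real.exp (genEntropy fun i => (ν i : ℝ)) ≤
        (Nat.multinomial Finset.univ ν : ℝ) ∧
      (Nat.multinomial Finset.univ ν : ℝ) ≤
        S * Real.exp (genEntropy fun i => (ν i : ℝ)) := by
  intro supp k S
  have hν : ∀ i ∈ supp, ν i ≠ 0 := fun i hi => (mem_filter.mp hi).2
  have hn_supp : n = ∑ i ∈ supp, ν i := hn.trans (sum_filter_ne_zero _).symm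
  have hne : supp.Nonempty := nonempty_of_sum_ne_zero (by rw [← hn_supp]; omega)
  have hM : Nat.multinomial univ ν = Nat.multinomial supp ν :=
    (Nat.multinomial_congr_of_sdiff (filter_subset _ _) (by simp) fun _ _ => rfl).symm
  have hSG : logStirlingMultinomial supp ν = log S + genEntropy fun i => (ν i : ℝ) := by
    have hN : ∑ i ∈ supp, (ν i : ℝ) = n := by rw [hn_supp]; push_cast; rfl
    rw [logStirlingMultinomial_eq hne hν, genEntropy_eq_of_support_subset (t := supp)
      fun i hi => by simpa [supp] using hi, hN]
  have hS : 0 < S := by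
    have hP : 0 < ∏ i ∈ supp, (ν i : ℝ) :=
      prod_pos fun i hi => Nat.cast_pos.mpr (Nat.pos_of_ne_zero (hν i hi))
    have : (0 : ℝ) < n := by exact_mod_cast hn1
    positivity
  have hM0 : (0 : ℝ) < Nat.multinomial supp ν := Nat.cast_pos.mpr (Nat.multinomial_pos _ _)
  have hlow := logStirlingMultinomial_sub_le_log_multinomial hne hν
  have hup := log_multinomial_le hne hν
  rw [hSG] at hlow hup
  rw [hM]
  constructor
  · rw [← exp_log hS, ← exp_add, ← exp_add, ← le_log_iff_exp_le hM0]
    linarith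
  · rw [← exp_log hS, ← exp_add, ← log_le_iff_le_exp hM0]
    exact hup
end

section
/- For all integers m ≥ 1 and n ≥ 1, Σ_{k=1}^m ( binom(m,k) · (n/2)^{k/2} / Γ(k/2) ) < ( (n/2)^{m/2} / Γ(m/2) ) · ( 1 + √(m/n) )^m, where binom(m,k) is the binomial coefficient and Γ is the Gamma function. (Moreover this bound is asymptotically tight: for fixed m, the ratio of the left side to the right side tends to 1 as n → ∞.) -/
/-!
Log-convexity of `Γ` between `x` and `x + 1` gives `Γ(x + 1/2) ≤ √x Γ(x)`; iterating,
`Γ(m/2) ≤ Γ(k/2) √(m/2)^(m-k)` for `1 ≤ k ≤ m`. Hence, with `s = √(n/2)`, the `k`-th summand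
is at most the `k`-th term of the binomial expansion of `(s + √(m/2))^m / Γ(m/2)`, which is the
right-hand side; the `k = 0` term is missing on the left, so the inequality is strict. As
`s → ∞` the right-hand side is `~ s^m / Γ(m/2)`, and only the `k = m` summand is of that order.
-/

open Real Filter Topology Finset

namespace Real

-- Midpoint log-convexity (Bohr–Mollerup) of `Γ` between `x` and `x + 1`.
theorem Gamma_add_half_le_sqrt_mul_Gamma {x : ℝ} (hx : 0 < x) :
    Gamma (x + 1 / 2) ≤ √x * Gamma x := by
  have hG := Gamma_pos_of_pos hx
  have h := Gamma_mul_add_mul_le_rpow_Gamma_mul_rpow_Gamma (a := 1 / 2) (b := 1 / 2)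
    hx (by linarith : 0 < x + 1) one_half_pos one_half_pos (by norm_num)
  rw [show 1 / 2 * x + 1 / 2 * (x + 1) = x + 1 / 2 by ring, Gamma_add_one hx.ne',
    mul_rpow hx.le hG.le, ← sqrt_eq_rpow, ← sqrt_eq_rpow] at h
  calc Gamma (x + 1 / 2) ≤ √(Gamma x) * (√x * √(Gamma x)) := h
    _ = √x * Gamma x := by rw [mul_left_comm, mul_self_sqrt hG.le]

theorem Gamma_add_nat_div_two_le_mul_sqrt_pow {x c : ℝ} (hx : 0 < x) {j : ℕ} (hxc : x + j / 2 ≤ c) :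
    Gamma (x + j / 2) ≤ Gamma x * √c ^ j := by
  induction j with
  | zero => simp
  | succ j ih =>
    have hxj : x + j / 2 ≤ c := by push_cast at hxc; linarith
    calc Gamma (x + ↑(j + 1) / 2) = Gamma (x + j / 2 + 1 / 2) := by push_cast; ring_nf
      _ ≤ √(x + j / 2) * Gamma (x + j / 2) :=
        Gamma_add_half_le_sqrt_mul_Gamma (by positivity)
      _ ≤ √c * (Gamma x * √c ^ j) := by
        gcongr
        exact ih hxj
      _ = Gamma x * √c ^ (j + 1) := by ring

theorem rpow_natCast_div_two {x : ℝ} (hx : 0 ≤ x) (k : ℕ) : x ^ ((k : ℝ) / 2) = √x ^ k := by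
  rw [sqrt_eq_rpow, ← rpow_natCast, ← rpow_mul hx]
  ring_nf

end Real

theorem Gamma_natCast_div_two_le_mul_sqrt_pow {k m : ℕ} (hk : 1 ≤ k) (hkm : k ≤ m) :
    Gamma (m / 2) ≤ Gamma (k / 2) * √(m / 2) ^ (m - k) := by
  have h := Gamma_add_nat_div_two_le_mul_sqrt_pow (x := k / 2) (c := m / 2) (j := m - k)
    (by positivity) (by rw [Nat.cast_sub hkm]; linarith)
  rwa [Nat.cast_sub hkm, show (k : ℝ) / 2 + (m - k) / 2 = m / 2 by ring] at h

theorem sum_choose_mul_pow_div_Gamma_lt {m : ℕ} (hm : 1 ≤ m) {s : ℝ} (hs : 0 ≤ s) :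
    ∑ k ∈ Icc 1 m, (m.choose k : ℝ) * s ^ k / Gamma (k / 2) <
      (s + √(m / 2)) ^ m / Gamma (m / 2) := by
  set c := √((m : ℝ) / 2)
  have hc : 0 < c := sqrt_pos.2 (by positivity)
  have hG : 0 < Gamma (m / 2) := Gamma_pos_of_pos (by positivity)
  set b : ℕ → ℝ := fun k ↦ (m.choose k : ℝ) * s ^ k * c ^ (m - k) / Gamma (m / 2)
  have hterm : ∀ k ∈ Icc 1 m, (m.choose k : ℝ) * s ^ k / Gamma (k / 2) ≤ b k := by
    intro k hk
    obtain ⟨hk1, hkm⟩ := mem_Icc.1 hk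
    have hGk : 0 < Gamma (k / 2) := Gamma_pos_of_pos (by positivity)
    rw [div_le_div_iff₀ hGk hG]
    calc (m.choose k : ℝ) * s ^ k * Gamma (m / 2)
        ≤ (m.choose k : ℝ) * s ^ k * (Gamma (k / 2) * c ^ (m - k)) := by
          gcongr; exact Gamma_natCast_div_two_le_mul_sqrt_pow hk1 hkm
      _ = (m.choose k : ℝ) * s ^ k * c ^ (m - k) * Gamma (k / 2) := by ring
  have hb0 : 0 < b 0 := by
    simp only [b, Nat.choose_zero_right, Nat.cast_one, pow_zero, Nat.sub_zero]; positivity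
  calc ∑ k ∈ Icc 1 m, (m.choose k : ℝ) * s ^ k / Gamma (k / 2)
      ≤ ∑ k ∈ Icc 1 m, b k := sum_le_sum hterm
    _ < ∑ k ∈ range (m + 1), b k :=
      sum_lt_sum_of_subset (fun k hk ↦ by simp at hk ⊢; omega) (by simp) (by simp) hb0
        (fun k _ _ ↦ by simp only [b]; positivity)
    _ = (s + c) ^ m / Gamma (m / 2) := by
      rw [add_pow, sum_div]
      exact sum_congr rfl fun k _ ↦ by simp only [b]; ring

theorem tendsto_sum_choose_mul_pow_div_Gamma_div {m : ℕ} (hm : 1 ≤ m) :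
    Tendsto (fun s : ℝ ↦ (∑ k ∈ Icc 1 m, (m.choose k : ℝ) * s ^ k / Gamma (k / 2)) /
      ((s + √(m / 2)) ^ m / Gamma (m / 2))) atTop (𝓝 1) := by
  set c := √((m : ℝ) / 2)
  have hG : 0 < Gamma (m / 2) := Gamma_pos_of_pos (by positivity)
  set P : ℝ → ℝ := fun u ↦
    ∑ k ∈ Icc 1 m, (m.choose k : ℝ) * Gamma (m / 2) / Gamma (k / 2) * u ^ (m - k)
  have hP0 : P 0 = 1 := by
    simp only [P]
    rw [sum_eq_single m (fun k hk hkm ↦ by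
      rw [zero_pow (Nat.sub_ne_zero_of_lt ((mem_Icc.1 hk).2.lt_of_ne hkm)), mul_zero])
      (by simp [hm])]
    simp [hG.ne']
  have hlim : Tendsto (fun u ↦ P u / (1 + c * u) ^ m) (𝓝 0) (𝓝 1) := by
    have : ContinuousAt (fun u ↦ P u / (1 + c * u) ^ m) 0 :=
      ContinuousAt.div (by fun_prop) (by fun_prop) (by simp)
    simpa [hP0] using this.tendsto
  -- In terms of `u = s⁻¹` the ratio is `P u / (1 + c u) ^ m`.
  refine (hlim.comp tendsto_inv_atTop_zero).congr' ?_
  filter_upwards [eventually_gt_atTop 0] with s hs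
  have hnum : ∑ k ∈ Icc 1 m, (m.choose k : ℝ) * s ^ k / Gamma (k / 2) =
      s ^ m / Gamma (m / 2) * P s⁻¹ := by
    rw [mul_sum]
    refine sum_congr rfl fun k hk ↦ ?_
    obtain ⟨hk1, hkm⟩ := mem_Icc.1 hk
    have hGk : 0 < Gamma (k / 2) := Gamma_pos_of_pos (by positivity)
    rw [← pow_mul_pow_sub s hkm, inv_pow]
    field_simp
  have hden : (s + c) ^ m / Gamma (m / 2) = s ^ m / Gamma (m / 2) * (1 + c * s⁻¹) ^ m := by
    rw [div_mul_eq_mul_div, ← mul_pow, mul_add, mul_one, mul_comm c, mul_inv_cancel_left₀ hs.ne']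
  rw [Function.comp_apply, hnum, hden, mul_div_mul_left _ _ (by positivity)]

/-- For all `m, n ≥ 1`,
`∑_{k=1}^m binom(m,k)(n/2)^{k/2}/Γ(k/2) < ((n/2)^{m/2}/Γ(m/2))(1+√(m/n))^m`,
and for fixed `m` the ratio of the two sides tends to `1` as `n → ∞`. -/
theorem stmt17 (m : ℕ) (hm : 1 ≤ m) :
    (∀ n : ℕ, 1 ≤ n →
      ∑ k ∈ Finset.Icc 1 m,
          (m.choose k : ℝ) * ((n : ℝ) / 2) ^ ((k : ℝ) / 2) / Real.Gamma ((k : ℝ) / 2)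
        < ((n : ℝ) / 2) ^ ((m : ℝ) / 2) / Real.Gamma ((m : ℝ) / 2) *
            (1 + Real.sqrt ((m : ℝ) / n)) ^ m) ∧
    Filter.Tendsto
      (fun n : ℕ =>
        (∑ k ∈ Finset.Icc 1 m,
            (m.choose k : ℝ) * ((n : ℝ) / 2) ^ ((k : ℝ) / 2) /
              Real.Gamma ((k : ℝ) / 2)) /
          (((n : ℝ) / 2) ^ ((m : ℝ) / 2) / Real.Gamma ((m : ℝ) / 2) *
            (1 + Real.sqrt ((m : ℝ) / n)) ^ m))
      Filter.atTop (nhds 1) := by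
  have hlhs (n : ℕ) : ∑ k ∈ Icc 1 m, (m.choose k : ℝ) * ((n : ℝ) / 2) ^ ((k : ℝ) / 2) /
      Gamma (k / 2) = ∑ k ∈ Icc 1 m, (m.choose k : ℝ) * √(n / 2) ^ k / Gamma (k / 2) := by
    simp only [rpow_natCast_div_two (by positivity : (0 : ℝ) ≤ n / 2)]
  have hrhs (n : ℕ) (hn : 1 ≤ n) : ((n : ℝ) / 2) ^ ((m : ℝ) / 2) / Gamma (m / 2) *
      (1 + √(m / n)) ^ m = (√(n / 2) + √(m / 2)) ^ m / Gamma (m / 2) := by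
    have hs : 0 < √((n : ℝ) / 2) := sqrt_pos.2 (by positivity)
    rw [rpow_natCast_div_two (by positivity), show (m : ℝ) / n = (m / 2) / (n / 2) by ring,
      sqrt_div (by positivity : (0 : ℝ) ≤ m / 2) (n / 2), div_mul_eq_mul_div, ← mul_pow,
      mul_add, mul_one, mul_div_cancel₀ _ hs.ne']
  have hsqrt : Tendsto (fun n : ℕ ↦ √((n : ℝ) / 2)) atTop atTop :=
    tendsto_sqrt_atTop.comp (tendsto_natCast_atTop_atTop.atTop_div_const two_pos)
  refine ⟨fun n hn ↦ ?_, ?_⟩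
  · rw [hlhs, hrhs n hn]
    exact sum_choose_mul_pow_div_Gamma_lt hm (sqrt_nonneg _)
  · refine ((tendsto_sum_choose_mul_pow_div_Gamma_div hm).comp hsqrt).congr' ?_
    filter_upwards [eventually_ge_atTop 1] with n hn
    rw [Function.comp_apply, hlhs, hrhs n hn]
end

section
/- Let α, β ≥ 0 with α + β ≥ 1, and set x₀ = 2α·ln(α+β) + β. Then x₀ ≥ α·ln x₀ + β; that is, x₀ is an explicit solution of the inequality x ≥ α ln x + β. (In particular, the inequality x ≥ α ln x + β holds at x₀, so the largest root of x = α ln x + β is at most x₀.) -/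
lemma log_le_half (s : ℝ) (hs : 0 < s) : Real.log s ≤ s / 2 := by
  have h := Real.log_le_sub_one_of_pos (Real.sqrt_pos.mpr hs)
  rw [Real.log_sqrt hs.le] at h
  nlinarith [Real.sq_sqrt hs.le, sq_nonneg (Real.sqrt s - 2)]

/-- For `α, β ≥ 0` with `α + β ≥ 1`, the point `x₀ = 2α ln(α+β) + β` satisfies
the inequality `x₀ ≥ α ln x₀ + β`. -/
theorem stmt19 (α β : ℝ) (hα : 0 ≤ α) (hβ : 0 ≤ β) (hαβ : 1 ≤ α + β) :
    2 * α * Real.log (α + β) + β ≥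
      α * Real.log (2 * α * Real.log (α + β) + β) + β := by
  have hs : (0:ℝ) < α + β := by linarith
  have hln : 0 ≤ Real.log (α + β) := Real.log_nonneg hαβ
  set x₀ := 2 * α * Real.log (α + β) + β with hx₀
  have hx₀nn : 0 ≤ x₀ := by positivity
  have hkey : Real.log x₀ ≤ 2 * Real.log (α + β) := by
    rcases eq_or_lt_of_le hx₀nn with h | h
    · rw [← h, Real.log_zero]; linarith
    · have hle : x₀ ≤ (α + β) ^ 2 := by
        nlinarith [log_le_half (α + β) hs]
      calc Real.log x₀ ≤ Real.log ((α + β) ^ 2) := Real.log_le_log h hle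
        _ = 2 * Real.log (α + β) := by
            rw [Real.log_pow]; push_cast; ring
  nlinarith [mul_le_mul_of_nonneg_left hkey hα]
end
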